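/- arXiv:1802.05200 — 10 statements merged into one kernel-verified Lean document; each statement's English description precedes it below -/
import Mathlib

section
/- For every n ≥ 1 there exists a transposition shuffle of order n of length n(n-1)/2. -/
/-!
Induction on `n`. Given a shuffle of order `n`, run it on `{1, …, n} ⊆ Fin (n + 1)` and follow it
by the chain of transpositions `(0 1), (1 2), …, (n-1 n)`, the `i`-th applied with probability
`(n - i) / (n + 1 - i)`. For the chain product `τ`, `τ⁻¹ 0` is the length of the initial run of
performed swaps, and these probabilities make it uniform on `Fin (n + 1)`. The first block yields
a uniform permutation `σ` fixing `0`, independent of `τ`, and `σ * τ = α` forces `τ⁻¹ 0 = α⁻¹ 0`,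
so every `α` gets probability `1 / n! * 1 / (n + 1)`. The length grows by `n`.
-/

open Finset

/-- The random permutation determined by outcomes `ω`: the composition `s₁ ∘ s₂ ∘ ⋯ ∘ s_ℓ`,
where `sᵢ` is the transposition swapping `a i` and `b i` if `ω i = true` and the identity
otherwise (convention `(σ * τ) x = σ (τ x)`). -/
def lazyPerm {n ℓ : ℕ} (a b : Fin ℓ → Fin n) (ω : Fin ℓ → Bool) : Equiv.Perm (Fin n) :=
  (List.ofFn fun i => if ω i then Equiv.swap (a i) (b i) else 1).prod

/-- The weight `∏ᵢ pᵢ^{ωᵢ} (1-pᵢ)^{1-ωᵢ}` of an outcome `ω`. -/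
def lazyWeight {ℓ : ℕ} (p : Fin ℓ → ℝ) (ω : Fin ℓ → Bool) : ℝ :=
  ∏ i, if ω i then p i else 1 - p i

/-- `(aᵢ, bᵢ, pᵢ)ᵢ` is a transposition shuffle of order `n`: a lazy transposition sequence
(`aᵢ ≠ bᵢ`, `pᵢ ∈ [0,1]`) such that the induced distribution on `Sₙ` is uniform. -/
def IsTranspositionShuffle (n ℓ : ℕ) (a b : Fin ℓ → Fin n) (p : Fin ℓ → ℝ) : Prop :=
  (∀ i, a i ≠ b i) ∧ (∀ i, 0 ≤ p i ∧ p i ≤ 1) ∧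
    ∀ α : Equiv.Perm (Fin n),
      ∑ ω ∈ univ.filter fun ω : Fin ℓ → Bool => lazyPerm a b ω = α,
        lazyWeight p ω = 1 / (n.factorial : ℝ)

open Equiv Equiv.Perm

theorem Equiv.Perm.viaEmbeddingHom_swap {α β : Type*} [DecidableEq α] [DecidableEq β]
    (ι : α ↪ β) (x y : α) : viaEmbeddingHom ι (swap x y) = swap (ι x) (ι y) := by
  ext z
  rw [viaEmbeddingHom_apply]
  by_cases hz : z ∈ Set.range ι
  · obtain ⟨w, rfl⟩ := hz
    rw [viaEmbedding_apply, ι.injective.swap_apply]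
  · rw [viaEmbedding_apply_of_notMem _ _ _ hz, swap_apply_of_ne_of_ne]
    · exact fun h => hz ⟨x, h.symm⟩
    · exact fun h => hz ⟨y, h.symm⟩

section LazyTranspositions

variable {n m ℓ : ℕ}

noncomputable def lazyExpect (a b : Fin ℓ → Fin n) (p : Fin ℓ → ℝ) (f : Perm (Fin n) → ℝ) : ℝ :=
  ∑ ω, lazyWeight p ω * f (lazyPerm a b ω)

theorem sum_filter_lazyPerm_eq_lazyExpect (a b : Fin ℓ → Fin n) (p : Fin ℓ → ℝ)
    (α : Perm (Fin n)) :
    ∑ ω ∈ univ.filter fun ω => lazyPerm a b ω = α, lazyWeight p ω =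
      lazyExpect a b p fun σ => if σ = α then 1 else 0 := by
  simp [lazyExpect, Finset.sum_filter]

theorem lazyExpect_const (a b : Fin ℓ → Fin n) (p : Fin ℓ → ℝ) (c : ℝ) :
    lazyExpect a b p (fun _ => c) = c := by
  have hmass : ∑ ω : Fin ℓ → Bool, lazyWeight p ω = 1 := by
    rw [Finset.sum_congr rfl fun ω _ => lazyWeight.eq_def p ω,
      ← Fintype.prod_sum fun i (b : Bool) => if b then p i else 1 - p i]
    simp
  rw [lazyExpect, ← Finset.sum_mul, hmass, one_mul]

theorem lazyPerm_succ (a b : Fin (ℓ + 1) → Fin n) (ω : Fin (ℓ + 1) → Bool) :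
    lazyPerm a b ω = (if ω 0 then swap (a 0) (b 0) else 1) *
      lazyPerm (fun i => a i.succ) (fun i => b i.succ) (fun i => ω i.succ) := by
  rw [lazyPerm, List.ofFn_succ, List.prod_cons, lazyPerm]

theorem lazyWeight_succ (p : Fin (ℓ + 1) → ℝ) (ω : Fin (ℓ + 1) → Bool) :
    lazyWeight p ω = (if ω 0 then p 0 else 1 - p 0) *
      lazyWeight (fun i => p i.succ) (fun i => ω i.succ) := by
  rw [lazyWeight, Fin.prod_univ_succ, lazyWeight]

theorem lazyExpect_succ (a b : Fin (ℓ + 1) → Fin n) (p : Fin (ℓ + 1) → ℝ)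
    (f : Perm (Fin n) → ℝ) :
    lazyExpect a b p f =
      p 0 * lazyExpect (fun i => a i.succ) (fun i => b i.succ) (fun i => p i.succ)
          (fun σ => f (swap (a 0) (b 0) * σ)) +
        (1 - p 0) * lazyExpect (fun i => a i.succ) (fun i => b i.succ) (fun i => p i.succ) f := by
  rw [lazyExpect, ← (Fin.consEquiv fun _ => Bool).sum_comp, Fintype.sum_prod_type,
    Fintype.sum_bool, lazyExpect, lazyExpect, Finset.mul_sum, Finset.mul_sum]
  congr 1 <;> refine Finset.sum_congr rfl fun ω _ => ?_ <;>
    simp [Fin.consEquiv, lazyPerm_succ, lazyWeight_succ, mul_assoc]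

theorem lazyPerm_append (a₁ b₁ : Fin m → Fin n) (a₂ b₂ : Fin ℓ → Fin n)
    (ω₁ : Fin m → Bool) (ω₂ : Fin ℓ → Bool) :
    lazyPerm (Fin.append a₁ a₂) (Fin.append b₁ b₂) (Fin.append ω₁ ω₂) =
      lazyPerm a₁ b₁ ω₁ * lazyPerm a₂ b₂ ω₂ := by
  have hfactors : (fun i => if Fin.append ω₁ ω₂ i then
        swap (Fin.append a₁ a₂ i) (Fin.append b₁ b₂ i) else 1) =
      Fin.append (fun i => if ω₁ i then swap (a₁ i) (b₁ i) else 1)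
        (fun i => if ω₂ i then swap (a₂ i) (b₂ i) else 1) := by
    funext i
    refine Fin.addCases (fun j => ?_) (fun j => ?_) i <;> simp
  rw [lazyPerm, hfactors, List.ofFn_fin_append, List.prod_append, lazyPerm, lazyPerm]

theorem lazyWeight_append (p₁ : Fin m → ℝ) (p₂ : Fin ℓ → ℝ)
    (ω₁ : Fin m → Bool) (ω₂ : Fin ℓ → Bool) :
    lazyWeight (Fin.append p₁ p₂) (Fin.append ω₁ ω₂) = lazyWeight p₁ ω₁ * lazyWeight p₂ ω₂ := by
  simp [lazyWeight, Fin.prod_univ_add]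

theorem lazyExpect_append (a₁ b₁ : Fin m → Fin n) (p₁ : Fin m → ℝ)
    (a₂ b₂ : Fin ℓ → Fin n) (p₂ : Fin ℓ → ℝ) (f : Perm (Fin n) → ℝ) :
    lazyExpect (Fin.append a₁ a₂) (Fin.append b₁ b₂) (Fin.append p₁ p₂) f =
      lazyExpect a₂ b₂ p₂ fun τ => lazyExpect a₁ b₁ p₁ fun σ => f (σ * τ) := by
  rw [lazyExpect, ← (Fin.appendEquiv m ℓ).sum_comp, Fintype.sum_prod_type, Finset.sum_comm]
  simp only [lazyExpect, Finset.mul_sum]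
  refine Finset.sum_congr rfl fun ω₂ _ => Finset.sum_congr rfl fun ω₁ _ => ?_
  simp only [Fin.appendEquiv, Equiv.coe_fn_mk, lazyPerm_append, lazyWeight_append]
  ring

theorem lazyPerm_comp_embedding {k : ℕ} (ι : Fin n ↪ Fin k) (a b : Fin ℓ → Fin n)
    (ω : Fin ℓ → Bool) :
    lazyPerm (fun i => ι (a i)) (fun i => ι (b i)) ω = viaEmbeddingHom ι (lazyPerm a b ω) := by
  rw [lazyPerm, lazyPerm, map_list_prod, List.map_ofFn]
  refine congrArg (fun l => List.prod (List.ofFn l)) (funext fun i => ?_)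
  by_cases hω : ω i <;> simp [hω, viaEmbeddingHom_swap]

theorem lazyExpect_comp_embedding {k : ℕ} (ι : Fin n ↪ Fin k) (a b : Fin ℓ → Fin n)
    (p : Fin ℓ → ℝ) (f : Perm (Fin k) → ℝ) :
    lazyExpect (fun i => ι (a i)) (fun i => ι (b i)) p f =
      lazyExpect a b p fun σ => f (viaEmbeddingHom ι σ) := by
  simp only [lazyExpect, lazyPerm_comp_embedding]

end LazyTranspositions

section Lift

variable {n ℓ : ℕ}

noncomputable def liftPerm (n : ℕ) : Perm (Fin n) →* Perm (Fin (n + 1)) :=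
  viaEmbeddingHom (Fin.succEmb n)

@[simp]
theorem liftPerm_apply_succ (σ : Perm (Fin n)) (i : Fin n) :
    liftPerm n σ i.succ = (σ i).succ :=
  viaEmbedding_apply σ (Fin.succEmb n) i

@[simp]
theorem liftPerm_apply_zero (σ : Perm (Fin n)) : liftPerm n σ 0 = 0 :=
  viaEmbedding_apply_of_notMem σ (Fin.succEmb n) 0 fun ⟨i, hi⟩ => Fin.succ_ne_zero i hi

theorem liftPerm_eq_decomposeFin_symm (σ : Perm (Fin n)) :
    liftPerm n σ = decomposeFin.symm (0, σ) := by
  ext x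
  induction x using Fin.cases with
  | zero => simp [decomposeFin_symm_apply_zero]
  | succ i => simp [decomposeFin_symm_apply_succ]

theorem exists_liftPerm_eq_of_apply_zero {β : Perm (Fin (n + 1))} (hβ : β 0 = 0) :
    ∃ σ, liftPerm n σ = β := by
  refine ⟨(decomposeFin β).2, ?_⟩
  have hfst : (decomposeFin β).1 = 0 := by
    rw [← hβ, ← decomposeFin_symm_apply_zero (decomposeFin β).1 (decomposeFin β).2,
      Prod.mk.eta, Equiv.symm_apply_apply]
  rw [liftPerm_eq_decomposeFin_symm, ← hfst, Prod.mk.eta, Equiv.symm_apply_apply]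

theorem liftPerm_injective (n : ℕ) : Function.Injective (liftPerm n) :=
  viaEmbeddingHom_injective _

theorem lazyExpect_comp_succ (a b : Fin ℓ → Fin n) (p : Fin ℓ → ℝ)
    (f : Perm (Fin (n + 1)) → ℝ) :
    lazyExpect (fun i => (a i).succ) (fun i => (b i).succ) p f =
      lazyExpect a b p fun σ => f (liftPerm n σ) :=
  lazyExpect_comp_embedding (Fin.succEmb n) a b p f

theorem lazyExpect_liftPerm_eq (a b : Fin ℓ → Fin n) (p : Fin ℓ → ℝ)
    (huniform : ∀ σ, (lazyExpect a b p fun τ => if τ = σ then 1 else 0) = 1 / (n.factorial : ℝ))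
    (β : Perm (Fin (n + 1))) :
    (lazyExpect a b p fun σ => if liftPerm n σ = β then 1 else 0) =
      if β 0 = 0 then 1 / (n.factorial : ℝ) else 0 := by
  split_ifs with hβ
  · obtain ⟨σ, rfl⟩ := exists_liftPerm_eq_of_apply_zero hβ
    simpa only [(liftPerm_injective n).eq_iff] using huniform σ
  · refine (congrArg _ (funext fun σ => if_neg ?_)).trans (lazyExpect_const a b p 0)
    rintro rfl
    exact hβ (liftPerm_apply_zero σ)

end Lift

section Chain

noncomputable def chainProb (n : ℕ) (i : Fin n) : ℝ := ((n : ℝ) - i) / ((n : ℝ) + 1 - i)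

theorem chainProb_mem_Icc {n : ℕ} (i : Fin n) : chainProb n i ∈ Set.Icc 0 1 := by
  have hi : (i : ℝ) < n := by exact_mod_cast i.isLt
  rw [chainProb, Set.mem_Icc, div_le_one (by linarith)]
  exact ⟨div_nonneg (by linarith) (by linarith), by linarith⟩

theorem chainProb_succ (n : ℕ) (i : Fin n) : chainProb (n + 1) i.succ = chainProb n i := by
  simp only [chainProb, Fin.val_succ]
  push_cast
  ring_nf

theorem lazyExpect_chain (n : ℕ) (g : Fin (n + 1) → ℝ) :
    (lazyExpect Fin.castSucc Fin.succ (chainProb n) fun τ => g (τ⁻¹ 0)) =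
      (∑ j, g j) / (n + 1) := by
  induction n with
  | zero => simp [lazyExpect, lazyWeight, lazyPerm]
  | succ n ih =>
    have htail : (fun i : Fin n => i.succ.castSucc) = fun i => i.castSucc.succ := by
      funext i; exact (Fin.succ_castSucc i).symm
    have hswap : ∀ σ : Perm (Fin (n + 1)),
        ((swap (Fin.castSucc 0) (Fin.succ 0) * liftPerm (n + 1) σ)⁻¹ : Perm (Fin (n + 2))) 0 =
          (σ⁻¹ 0).succ := by
      intro σ
      rw [mul_inv_rev, swap_inv, Perm.mul_apply, Fin.castSucc_zero, swap_apply_left, ← map_inv,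
        liftPerm_apply_succ]
    have hlift : ∀ σ : Perm (Fin (n + 1)), (liftPerm (n + 1) σ)⁻¹ 0 = 0 := by
      intro σ
      rw [← map_inv, liftPerm_apply_zero]
    rw [lazyExpect_succ, htail, lazyExpect_comp_succ, lazyExpect_comp_succ]
    simp only [chainProb_succ, hswap, hlift, ih fun j => g j.succ, lazyExpect_const,
      Fin.sum_univ_succ g]
    simp only [chainProb, Fin.val_zero, CharP.cast_eq_zero, sub_zero]
    push_cast
    field_simp
    ring

end Chain

theorem isTranspositionShuffle_zero (a b : Fin 0 → Fin 0) (p : Fin 0 → ℝ) :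
    IsTranspositionShuffle 0 0 a b p :=
  ⟨fun i => i.elim0, fun i => i.elim0, fun α => by simp [lazyWeight, Subsingleton.elim _ α]⟩

theorem IsTranspositionShuffle.lift_append_chain {n ℓ : ℕ} {a b : Fin ℓ → Fin n}
    {p : Fin ℓ → ℝ} (h : IsTranspositionShuffle n ℓ a b p) :
    IsTranspositionShuffle (n + 1) (ℓ + n) (Fin.append (fun i => (a i).succ) Fin.castSucc)
      (Fin.append (fun i => (b i).succ) Fin.succ) (Fin.append p (chainProb n)) := by
  obtain ⟨hab, hp, huniform⟩ := h
  simp only [sum_filter_lazyPerm_eq_lazyExpect] at huniform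
  refine ⟨fun i => ?_, fun i => ?_, fun α => ?_⟩
  · refine Fin.addCases (fun j => ?_) (fun j => ?_) i
    · simpa using hab j
    · simpa using (Fin.castSucc_lt_succ (i := j)).ne
  · refine Fin.addCases (fun j => ?_) (fun j => ?_) i
    · simpa using hp j
    · simpa using chainProb_mem_Icc j
  have hlifted : ∀ τ : Perm (Fin (n + 1)),
      (lazyExpect a b p fun σ => if liftPerm n σ * τ = α then 1 else 0) =
        if α (τ⁻¹ 0) = 0 then 1 / (n.factorial : ℝ) else 0 := by
    intro τ
    simp only [← eq_mul_inv_iff_mul_eq]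
    rw [lazyExpect_liftPerm_eq a b p huniform, Perm.mul_apply]
  have hcount : (∑ j, if α j = 0 then 1 / (n.factorial : ℝ) else 0) = 1 / n.factorial :=
    (Equiv.sum_comp α fun k => if k = 0 then 1 / (n.factorial : ℝ) else 0).trans (by simp)
  rw [sum_filter_lazyPerm_eq_lazyExpect, lazyExpect_append]
  simp only [lazyExpect_comp_succ, hlifted]
  rw [lazyExpect_chain n fun j => if α j = 0 then 1 / (n.factorial : ℝ) else 0, hcount,
    Nat.factorial_succ]
  push_cast
  field_simp

theorem exists_shuffle_of_length_choose_two_general (n : ℕ) :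
    ∃ (a b : Fin (n * (n - 1) / 2) → Fin n) (p : Fin (n * (n - 1) / 2) → ℝ),
      IsTranspositionShuffle n (n * (n - 1) / 2) a b p := by
  induction n with
  | zero => exact ⟨_, _, _, isTranspositionShuffle_zero Fin.elim0 Fin.elim0 Fin.elim0⟩
  | succ n ih =>
    obtain ⟨a, b, p, h⟩ := ih
    rw [Nat.triangle_succ]
    exact ⟨_, _, _, h.lift_append_chain⟩

/-- for every `n ≥ 1` there is a transposition shuffle of order `n`
of length `n(n-1)/2`. -/
theorem exists_shuffle_of_length_choose_two (n : ℕ) (hn : 1 ≤ n) :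
    ∃ (a b : Fin (n * (n - 1) / 2) → Fin n) (p : Fin (n * (n - 1) / 2) → ℝ),
      IsTranspositionShuffle n (n * (n - 1) / 2) a b p :=
  exists_shuffle_of_length_choose_two_general n
end

section
/- Let (a_i)_{i=1}^ℓ be any reduced word of order n, where ℓ = n(n-1)/2, and define probabilities p_j := (v_j - u_j)/(v_j - u_j + 1) as in Construction A. Then (a_i, a_i+1, p_i)_{i=1}^ℓ is a (simple) transposition shuffle of order n. -/
open Finset

/-- The composition `t(a₁,b₁) ∘ ⋯ ∘ t(a_j,b_j)` of the first `j` transpositions. -/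
def partialSwaps {n ℓ : ℕ} (a b : Fin ℓ → Fin n) (j : ℕ) : Equiv.Perm (Fin n) :=
  ((List.ofFn fun i => Equiv.swap (a i) (b i)).take j).prod

/-- The reverse permutation `ρ`. -/
def reversePerm (n : ℕ) : Equiv.Perm (Fin n) := ⟨Fin.rev, Fin.rev, Fin.rev_rev, Fin.rev_rev⟩

open Equiv

namespace ShufA

variable {n : ℕ}

/-- value (as ℕ) of `σ` at position `k`; junk value `k` out of range. -/
def sval (σ : Equiv.Perm (Fin n)) (k : ℕ) : ℕ :=
  if h : k < n then (σ ⟨k, h⟩ : ℕ) else k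

/-- descent at position `k` -/
def desc (σ : Equiv.Perm (Fin n)) (k : ℕ) : Prop :=
  k + 1 < n ∧ sval σ (k + 1) < sval σ k

instance (σ : Equiv.Perm (Fin n)) : DecidablePred (desc σ) := fun k => by
  unfold desc; infer_instance

/-- adjacent transposition at positions `k`, `k+1` (with `n` explicit) -/
def sw (n k : ℕ) : Equiv.Perm (Fin n) :=
  if h : k + 1 < n then Equiv.swap ⟨k, by omega⟩ ⟨k + 1, h⟩ else 1

lemma sw_mul_self (k : ℕ) : sw n k * sw n k = 1 := by
  unfold sw; split
  · exact Equiv.swap_mul_self _ _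
  · exact one_mul 1

def invSet (σ : Equiv.Perm (Fin n)) : Finset (Fin n × Fin n) :=
  univ.filter fun p => p.1 < p.2 ∧ σ p.2 < σ p.1

def invN (σ : Equiv.Perm (Fin n)) : ℕ := (invSet σ).card

lemma sval_lt (σ : Equiv.Perm (Fin n)) {k : ℕ} (h : k < n) : sval σ k < n := by
  unfold sval; rw [dif_pos h]; exact (σ ⟨k, h⟩).2

lemma sval_inj (σ : Equiv.Perm (Fin n)) {j k : ℕ} (hj : j < n) (hk : k < n)
    (h : sval σ j = sval σ k) : j = k := by
  unfold sval at h; rw [dif_pos hj, dif_pos hk] at h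
  have := σ.injective (Fin.val_injective h)
  simpa [Fin.ext_iff] using this

lemma sval_mul_sw (σ : Equiv.Perm (Fin n)) {k : ℕ} (hk : k + 1 < n) (j : ℕ) :
    sval (σ * sw n k) j =
      if j = k then sval σ (k + 1) else if j = k + 1 then sval σ k else sval σ j := by
  unfold sval sw
  rw [dif_pos hk]
  by_cases h1 : j = k
  · subst h1
    rw [if_pos rfl, dif_pos (by omega : j < n), dif_pos hk, Equiv.Perm.mul_apply,
      Equiv.swap_apply_left]
  · rw [if_neg h1]
    by_cases h2 : j = k + 1
    · subst h2
      rw [if_pos rfl, dif_pos hk, dif_pos (by omega : k < n), Equiv.Perm.mul_apply,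
        Equiv.swap_apply_right]
    · rw [if_neg h2]
      by_cases h3 : j < n
      · rw [dif_pos h3, dif_pos h3, Equiv.Perm.mul_apply,
          Equiv.swap_apply_of_ne_of_ne (by simp [Fin.ext_iff, h1]) (by simp [Fin.ext_iff, h2])]
      · rw [dif_neg h3, dif_neg h3]

lemma val_swap {x y u : Fin n} : ((Equiv.swap x y) u : ℕ) =
    if (u : ℕ) = (x : ℕ) then (y : ℕ) else if (u : ℕ) = (y : ℕ) then (x : ℕ) else (u : ℕ) := by
  rcases eq_or_ne u x with rfl | hx
  · simp [Equiv.swap_apply_left]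
  · rcases eq_or_ne u y with rfl | hy
    · rw [Equiv.swap_apply_right, if_neg (by simpa [Fin.ext_iff] using hx), if_pos rfl]
    · rw [Equiv.swap_apply_of_ne_of_ne hx hy, if_neg (by simpa [Fin.ext_iff] using hx),
        if_neg (by simpa [Fin.ext_iff] using hy)]

lemma swap_adj_lt {x y u v : Fin n} (hxy : (y : ℕ) = (x : ℕ) + 1) (huv : u < v)
    (hne : ¬(u = x ∧ v = y)) : Equiv.swap x y u < Equiv.swap x y v := by
  have hne2 : ¬((u : ℕ) = (x : ℕ) ∧ (v : ℕ) = (y : ℕ)) := by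
    simpa [Fin.ext_iff] using hne
  have huv2 : (u : ℕ) < (v : ℕ) := huv
  rw [Fin.lt_def, val_swap, val_swap]
  split_ifs <;> omega

lemma invN_asc (σ : Equiv.Perm (Fin n)) {k : ℕ} (hk : k + 1 < n)
    (h : sval σ k < sval σ (k + 1)) : invN (σ * sw n k) = invN σ + 1 := by
  have hkn : k < n := by omega
  set x : Fin n := ⟨k, hkn⟩ with hx
  set y : Fin n := ⟨k + 1, hk⟩ with hy
  have hxy : (y : ℕ) = (x : ℕ) + 1 := rfl
  have hsw : sw n k = Equiv.swap x y := by unfold sw; rw [dif_pos hk]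
  have hxyval : σ x < σ y := by
    have h' := h; unfold sval at h'; rw [dif_pos hkn, dif_pos hk] at h'
    exact h'
  have notim : ∀ u v : Fin n, u < v →
      ¬((Equiv.swap x y u, Equiv.swap x y v) = (x, y)) := by
    intro u v huv hco
    have hc1 : Equiv.swap x y u = x := congrArg Prod.fst hco
    have hc2 : Equiv.swap x y v = y := congrArg Prod.snd hco
    have hu : u = y := by
      have h3 := congrArg (Equiv.swap x y) hc1
      rwa [Equiv.swap_apply_self, Equiv.swap_apply_left] at h3
    have hv : v = x := by
      have h3 := congrArg (Equiv.swap x y) hc2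
      rwa [Equiv.swap_apply_self, Equiv.swap_apply_right] at h3
    rw [hu, hv, Fin.lt_def] at huv
    omega
  have key : ((invSet (σ * sw n k)).erase (x, y)).card = ((invSet σ).erase (x, y)).card := by
    apply Finset.card_bij' (fun p _ => (Equiv.swap x y p.1, Equiv.swap x y p.2))
      (fun p _ => (Equiv.swap x y p.1, Equiv.swap x y p.2))
    · rintro ⟨u, v⟩ hm
      rw [Finset.mem_erase, invSet, Finset.mem_filter] at hm
      obtain ⟨hne, -, huv, hinv⟩ := hm
      dsimp only at huv hinv ⊢
      rw [Finset.mem_erase, invSet, Finset.mem_filter]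
      have hne' : ¬(u = x ∧ v = y) := by rintro ⟨rfl, rfl⟩; exact hne rfl
      refine ⟨notim u v huv, Finset.mem_univ _, swap_adj_lt hxy huv hne', ?_⟩
      simpa [hsw, Equiv.Perm.mul_apply] using hinv
    · rintro ⟨u, v⟩ hm
      rw [Finset.mem_erase, invSet, Finset.mem_filter] at hm
      obtain ⟨hne, -, huv, hinv⟩ := hm
      dsimp only at huv hinv ⊢
      rw [Finset.mem_erase, invSet, Finset.mem_filter]
      have hne' : ¬(u = x ∧ v = y) := by rintro ⟨rfl, rfl⟩; exact hne rfl
      refine ⟨notim u v huv, Finset.mem_univ _, swap_adj_lt hxy huv hne', ?_⟩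
      simp only [hsw, Equiv.Perm.mul_apply, Equiv.swap_apply_self]
      exact hinv
    · rintro ⟨u, v⟩ _; simp [Equiv.swap_apply_self]
    · rintro ⟨u, v⟩ _; simp [Equiv.swap_apply_self]
  have hmem1 : (x, y) ∈ invSet (σ * sw n k) := by
    rw [invSet, Finset.mem_filter]
    refine ⟨Finset.mem_univ _, by simp [Fin.lt_def, hx, hy], ?_⟩
    dsimp only
    rw [hsw]
    simp only [Equiv.Perm.mul_apply, Equiv.swap_apply_left, Equiv.swap_apply_right]
    exact hxyval
  have hmem2 : (x, y) ∉ invSet σ := by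
    rw [invSet, Finset.mem_filter]
    push_neg
    intro _ _
    exact le_of_lt hxyval
  unfold invN
  rw [← Finset.card_erase_add_one hmem1, key, Finset.erase_eq_of_notMem hmem2]

lemma invN_desc (σ : Equiv.Perm (Fin n)) {k : ℕ} (hk : k + 1 < n)
    (h : sval σ (k + 1) < sval σ k) : invN (σ * sw n k) + 1 = invN σ := by
  have h2 : sval (σ * sw n k) k < sval (σ * sw n k) (k + 1) := by
    rw [sval_mul_sw σ hk, sval_mul_sw σ hk]
    simpa using h
  have h3 := invN_asc (σ * sw n k) hk h2
  rw [mul_assoc, sw_mul_self, mul_one] at h3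
  omega


lemma sval_one (k : ℕ) : sval (1 : Equiv.Perm (Fin n)) k = k := by
  unfold sval
  split <;> rfl

lemma exists_desc_of_ne_one {σ : Equiv.Perm (Fin n)} (h : σ ≠ 1) : ∃ k, desc σ k := by
  by_contra hno
  push_neg at hno
  have mono : ∀ j, j + 1 < n → sval σ j < sval σ (j + 1) := by
    intro j hj
    have h1 := hno j
    unfold desc at h1
    push_neg at h1
    have h2 := h1 hj
    rcases lt_or_eq_of_le h2 with h3 | h3
    · exact h3
    · exact absurd (sval_inj σ hj (by omega) h3.symm) (by omega)
  have lower : ∀ j, j < n → j ≤ sval σ j := by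
    intro j
    induction j with
    | zero => intro _; omega
    | succ j ih =>
      intro hj
      have h1 := ih (by omega)
      have h2 := mono j hj
      omega
  have upper : ∀ m j, j < n → n ≤ j + m → sval σ j ≤ j := by
    intro m
    induction m with
    | zero => intro j hj h2; omega
    | succ m ih =>
      intro j hj h2
      by_cases hj1 : j + 1 < n
      · have h3 := mono j hj1
        have h4 := ih (j + 1) hj1 (by omega)
        omega
      · have h5 := sval_lt σ hj
        omega
  apply h
  ext i
  have h1 := lower i.val i.2
  have h2 := upper n i.val i.2 (by omega)
  have h3 : sval σ i.val = i.val := by omega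
  unfold sval at h3
  rw [dif_pos i.2] at h3
  simpa using h3

lemma sw_comm {j k : ℕ} (hjk : j + 1 < k) : sw n j * sw n k = sw n k * sw n j := by
  by_cases hj : j + 1 < n
  · by_cases hk : k + 1 < n
    · unfold sw
      rw [dif_pos hj, dif_pos hk]
      have hd : Equiv.Perm.Disjoint (Equiv.swap (⟨j, by omega⟩ : Fin n) ⟨j + 1, hj⟩)
          (Equiv.swap (⟨k, by omega⟩ : Fin n) ⟨k + 1, hk⟩) := by
        intro z
        by_cases hz : z = (⟨j, by omega⟩ : Fin n) ∨ z = (⟨j + 1, hj⟩ : Fin n)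
        · rcases hz with rfl | rfl
          · right
            exact Equiv.swap_apply_of_ne_of_ne (by simp only [ne_eq, Fin.mk.injEq]; omega)
              (by simp only [ne_eq, Fin.mk.injEq]; omega)
          · right
            exact Equiv.swap_apply_of_ne_of_ne (by simp only [ne_eq, Fin.mk.injEq]; omega)
              (by simp only [ne_eq, Fin.mk.injEq]; omega)
        · left
          push_neg at hz
          exact Equiv.swap_apply_of_ne_of_ne hz.1 hz.2
      exact hd.commute.eq
    · unfold sw; rw [dif_neg hk, mul_one, one_mul]
  · unfold sw; rw [dif_neg hj, mul_one, one_mul]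

lemma sw_braid {k : ℕ} (hk : k + 2 < n) :
    sw n k * sw n (k + 1) * sw n k = sw n (k + 1) * sw n k * sw n (k + 1) := by
  have h1 : k + 1 < n := by omega
  have h2 : k + 1 + 1 < n := by omega
  set a : Fin n := ⟨k, by omega⟩ with ha
  set b : Fin n := ⟨k + 1, by omega⟩ with hb
  set c : Fin n := ⟨k + 2, by omega⟩ with hc
  have hsw1 : sw n k = Equiv.swap a b := by unfold sw; rw [dif_pos h1]
  have hsw2 : sw n (k + 1) = Equiv.swap b c := by
    unfold sw; rw [dif_pos h2]
  have hab : a ≠ b := by simp [ha, hb, Fin.ext_iff]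
  have hac : a ≠ c := by simp [ha, hc, Fin.ext_iff]
  have hcb : c ≠ b := by simp [hc, hb, Fin.ext_iff]
  have hca : c ≠ a := fun h => hac h.symm
  rw [hsw1, hsw2]
  have hL : Equiv.swap a b * Equiv.swap b c * Equiv.swap a b = Equiv.swap a c := by
    have h3 := Equiv.swap_mul_swap_mul_swap hcb hca
    rwa [Equiv.swap_comm b a, Equiv.swap_comm c b] at h3
  have hR : Equiv.swap b c * Equiv.swap a b * Equiv.swap b c = Equiv.swap c a :=
    Equiv.swap_mul_swap_mul_swap hab hac
  rw [hL, hR, Equiv.swap_comm c a]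

noncomputable def F (σ : Equiv.Perm (Fin n)) : Equiv.Perm (Fin n) → ℝ :=
  if h : σ = 1 then fun π => if π = 1 then 1 else 0
  else
    have hd : ∃ k, desc σ k := exists_desc_of_ne_one h
    let k := Nat.find hd
    let d : ℕ := sval σ k - sval σ (k + 1)
    fun π => (1 / (d + 1) : ℝ) * F (σ * sw n k) π +
      (d / (d + 1) : ℝ) * F (σ * sw n k) (π * sw n k)
termination_by invN σ
decreasing_by
  all_goals {
    have hdk := Nat.find_spec hd
    have h5 := invN_desc σ hdk.1 hdk.2
    omega }

lemma F_one (π : Equiv.Perm (Fin n)) : F 1 π = if π = 1 then 1 else 0 := by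
  rw [F]
  simp

lemma F_unfold {σ : Equiv.Perm (Fin n)} {b : ℕ} (hb : desc σ b)
    (hmin : ∀ j < b, ¬ desc σ j) (π : Equiv.Perm (Fin n)) :
    F σ π = (1 / ((sval σ b - sval σ (b + 1) : ℕ) + 1) : ℝ) * F (σ * sw n b) π +
      ((sval σ b - sval σ (b + 1) : ℕ) / ((sval σ b - sval σ (b + 1) : ℕ) + 1) : ℝ) *
        F (σ * sw n b) (π * sw n b) := by
  have hne : σ ≠ 1 := by
    intro h
    rw [h] at hb
    unfold desc at hb
    rw [sval_one, sval_one] at hb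
    omega
  have hd : ∃ k, desc σ k := exists_desc_of_ne_one hne
  have hfind : Nat.find hd = b := (Nat.find_eq_iff hd).mpr ⟨hb, hmin⟩
  conv_lhs => rw [F]
  rw [dif_neg hne]
  simp only [hfind]

/-- the lazy-transposition transfer operator -/
noncomputable def T (d : ℕ) (t : Equiv.Perm (Fin n)) (f : Equiv.Perm (Fin n) → ℝ) :
    Equiv.Perm (Fin n) → ℝ :=
  fun π => (1 / (d + 1) : ℝ) * f π + (d / (d + 1) : ℝ) * f (π * t)

lemma T_comm {s t : Equiv.Perm (Fin n)} (hc : s * t = t * s) (d e : ℕ)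
    (f : Equiv.Perm (Fin n) → ℝ) : T d s (T e t f) = T e t (T d s f) := by
  funext π
  simp only [T]
  rw [show π * s * t = π * t * s by rw [mul_assoc, hc, mul_assoc]]
  ring

lemma T_braid {s t : Equiv.Perm (Fin n)} (hs : s * s = 1) (ht : t * t = 1)
    (hb : s * t * s = t * s * t) (p q : ℕ) (f : Equiv.Perm (Fin n) → ℝ) :
    T q s (T (p + q) t (T p s f)) = T p t (T (p + q) s (T q t f)) := by
  funext π
  simp only [T]
  have e1 : π * s * s = π := by rw [mul_assoc, hs, mul_one]
  have e2 : π * t * t = π := by rw [mul_assoc, ht, mul_one]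
  have hb' : s * (t * s) = t * (s * t) := by
    rw [← mul_assoc, hb, mul_assoc]
  have e3 : π * s * t * s = π * t * s * t := by
    rw [mul_assoc, mul_assoc, hb', ← mul_assoc, ← mul_assoc]
  rw [e1, e2, e3]
  have h1 : ((p : ℝ) + 1) ≠ 0 := by positivity
  have h2 : ((q : ℝ) + 1) ≠ 0 := by positivity
  have h3 : (((p : ℝ) + q) + 1) ≠ 0 := by positivity
  push_cast
  field_simp
  ring


lemma F_unfoldT {σ : Equiv.Perm (Fin n)} {b : ℕ} (hb : desc σ b)
    (hmin : ∀ j < b, ¬ desc σ j) :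
    F σ = T (sval σ b - sval σ (b + 1)) (sw n b) (F (σ * sw n b)) := by
  funext π
  rw [F_unfold hb hmin π]
  rfl

lemma exc (m : ℕ) : ∀ σ : Equiv.Perm (Fin n), invN σ = m → ∀ k, k + 1 < n →
    sval σ k < sval σ (k + 1) →
    F (σ * sw n k) = T (sval σ (k + 1) - sval σ k) (sw n k) (F σ) := by
  induction m using Nat.strong_induction_on with
  | _ m ih =>
  intro σ hm k hk hasc
  have hkn : k < n := by omega
  have hdk' : desc (σ * sw n k) k := by
    refine ⟨hk, ?_⟩
    rw [sval_mul_sw σ hk, sval_mul_sw σ hk, if_pos rfl, if_neg (by omega), if_pos rfl]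
    exact hasc
  have hd' : ∃ j, desc (σ * sw n k) j := ⟨k, hdk'⟩
  obtain ⟨b, hb, hmin, hbk⟩ : ∃ b, desc (σ * sw n k) b ∧ (∀ j < b, ¬ desc (σ * sw n k) j) ∧
      b ≤ k :=
    ⟨Nat.find hd', Nat.find_spec hd', fun j hj => Nat.find_min hd' hj,
      Nat.find_min' hd' hdk'⟩
  rcases Nat.lt_or_ge b k with hlt | hge
  · rcases Nat.lt_or_ge (b + 1) k with hlt2 | hge2
    · -- commuting case : b + 1 < k
      have hb1n : b + 1 < n := hb.1
      have hswc : sw n b * sw n k = sw n k * sw n b := sw_comm hlt2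
      have s1 : sval (σ * sw n k) b = sval σ b := by
        rw [sval_mul_sw σ hk, if_neg (by omega), if_neg (by omega)]
      have s2 : sval (σ * sw n k) (b + 1) = sval σ (b + 1) := by
        rw [sval_mul_sw σ hk, if_neg (by omega), if_neg (by omega)]
      have hbσ : desc σ b := ⟨hb1n, by rw [← s1, ← s2]; exact hb.2⟩
      have hminσ : ∀ j < b, ¬ desc σ j := by
        intro j hj hdj
        refine hmin j hj ⟨hdj.1, ?_⟩
        rw [sval_mul_sw σ hk, sval_mul_sw σ hk, if_neg (by omega), if_neg (by omega),
          if_neg (by omega), if_neg (by omega)]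
        exact hdj.2
      have hNτ : invN (σ * sw n b) + 1 = invN σ := invN_desc σ hb1n hbσ.2
      have hascτ : sval (σ * sw n b) k < sval (σ * sw n b) (k + 1) := by
        rw [sval_mul_sw σ hb1n, sval_mul_sw σ hb1n, if_neg (by omega), if_neg (by omega),
          if_neg (by omega), if_neg (by omega)]
        exact hasc
      have ihk := ih (invN (σ * sw n b)) (by omega) (σ * sw n b) rfl k hk hascτ
      have sτ1 : sval (σ * sw n b) k = sval σ k := by
        rw [sval_mul_sw σ hb1n, if_neg (by omega), if_neg (by omega)]
      have sτ2 : sval (σ * sw n b) (k + 1) = sval σ (k + 1) := by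
        rw [sval_mul_sw σ hb1n, if_neg (by omega), if_neg (by omega)]
      rw [sτ1, sτ2] at ihk
      have hgrp : σ * sw n k * sw n b = σ * sw n b * sw n k := by
        rw [mul_assoc, ← hswc, mul_assoc]
      rw [F_unfoldT hb hmin, s1, s2, hgrp, ihk, F_unfoldT hbσ hminσ]
      exact T_comm hswc _ _ _
    · -- braid case : b + 1 = k
      have hbk1 : b + 1 = k := by omega
      subst hbk1
      have hb1n : b + 1 < n := by omega
      set x := sval σ (b + 1) with hx
      set y := sval σ (b + 1 + 1) with hy
      set z := sval σ b with hz
      have s1 : sval (σ * sw n (b + 1)) b = z := by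
        rw [sval_mul_sw σ hk, if_neg (by omega), if_neg (by omega)]
      have s2 : sval (σ * sw n (b + 1)) (b + 1) = y := by
        rw [sval_mul_sw σ hk, if_pos rfl]
      have hzy : y < z := by rw [← s1, ← s2]; exact hb.2
      have hxy : x < y := hasc
      have hbσ : desc σ b := ⟨hb1n, by rw [← hx, ← hz]; omega⟩
      have hminσ : ∀ j < b, ¬ desc σ j := by
        intro j hj hdj
        refine hmin j hj ⟨hdj.1, ?_⟩
        rw [sval_mul_sw σ hk, sval_mul_sw σ hk, if_neg (by omega), if_neg (by omega),
          if_neg (by omega), if_neg (by omega)]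
        exact hdj.2
      -- τ = σ * sw b has values (x, z, y) at positions (b, b+1, b+2)
      have tτ1 : sval (σ * sw n b) b = x := by
        rw [sval_mul_sw σ hb1n, if_pos rfl]
      have tτ2 : sval (σ * sw n b) (b + 1) = z := by
        rw [sval_mul_sw σ hb1n, if_neg (by omega), if_pos rfl]
      have tτ3 : sval (σ * sw n b) (b + 1 + 1) = y := by
        rw [sval_mul_sw σ hb1n, if_neg (by omega), if_neg (by omega)]
      -- υ = τ * sw (b+1) has values (x, y, z)
      have tυ1 : sval (σ * sw n b * sw n (b + 1)) b = x := by
        rw [sval_mul_sw _ hk, if_neg (by omega), if_neg (by omega)]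
        exact tτ1
      have tυ2 : sval (σ * sw n b * sw n (b + 1)) (b + 1) = y := by
        rw [sval_mul_sw _ hk, if_pos rfl]
        exact tτ3
      have tυ3 : sval (σ * sw n b * sw n (b + 1)) (b + 1 + 1) = z := by
        rw [sval_mul_sw _ hk, if_neg (by omega), if_pos rfl]
        exact tτ2
      -- υ * sw b has values (y, x, z)
      have tw1 : sval (σ * sw n b * sw n (b + 1) * sw n b) (b + 1) = x := by
        rw [sval_mul_sw _ hb1n, if_neg (by omega), if_pos rfl]
        exact tυ1
      have tw2 : sval (σ * sw n b * sw n (b + 1) * sw n b) (b + 1 + 1) = z := by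
        rw [sval_mul_sw _ hb1n, if_neg (by omega), if_neg (by omega)]
        exact tυ3
      -- inversion counts
      have hN1 : invN (σ * sw n b) + 1 = invN σ := invN_desc σ hb1n (by rw [← hx, ← hz]; omega)
      have hN2 : invN (σ * sw n b * sw n (b + 1)) + 1 = invN (σ * sw n b) :=
        invN_desc _ hk (by rw [tτ2, tτ3]; omega)
      have hN3 : invN (σ * sw n b * sw n (b + 1) * sw n b) =
          invN (σ * sw n b * sw n (b + 1)) + 1 :=
        invN_asc _ hb1n (by rw [tυ1, tυ2]; omega)
      -- IH applications at υ and υ * sw b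
      have ih1 := ih (invN (σ * sw n b * sw n (b + 1))) (by omega)
        (σ * sw n b * sw n (b + 1)) rfl b hb1n (by rw [tυ1, tυ2]; omega)
      rw [tυ1, tυ2] at ih1
      have ih2 := ih (invN (σ * sw n b * sw n (b + 1))) (by omega)
        (σ * sw n b * sw n (b + 1)) rfl (b + 1) hk (by rw [tυ2, tυ3]; omega)
      rw [tυ2, tυ3] at ih2
      have ih3 := ih (invN (σ * sw n b * sw n (b + 1) * sw n b)) (by omega)
        (σ * sw n b * sw n (b + 1) * sw n b) rfl (b + 1) hk (by rw [tw1, tw2]; omega)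
      rw [tw1, tw2] at ih3
      -- group identities
      have hbr := sw_braid (n := n) (show b + 2 < n by omega)
      have h4 : sw n (b + 1) * sw n b = sw n b * (sw n (b + 1) * (sw n b * sw n (b + 1))) := by
        have h5 := congrArg (· * sw n (b + 1)) hbr
        simp only [mul_assoc, sw_mul_self, mul_one] at h5
        exact h5.symm
      have hgrp : σ * sw n (b + 1) * sw n b =
          σ * sw n b * sw n (b + 1) * sw n b * sw n (b + 1) := by
        simp only [mul_assoc]
        rw [h4]
      have hgrp2 : σ * sw n b * sw n (b + 1) * sw n (b + 1) = σ * sw n b := by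
        rw [mul_assoc, sw_mul_self, mul_one]
      rw [hgrp2] at ih2
      rw [F_unfoldT hb hmin, s1, s2, hgrp, ih3, ih1, F_unfoldT hbσ hminσ, ← hz, ← hx, ih2]
      have hpq : z - x = (y - x) + (z - y) := by omega
      rw [hpq]
      exact T_braid (sw_mul_self b) (sw_mul_self (b + 1)) hbr (y - x) (z - y) _
  · -- b = k
    have hbk' : b = k := by omega
    subst hbk'
    have hgrp : σ * sw n b * sw n b = σ := by
      rw [mul_assoc, sw_mul_self, mul_one]
    have s1 : sval (σ * sw n b) b = sval σ (b + 1) := by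
      rw [sval_mul_sw σ hk, if_pos rfl]
    have s2 : sval (σ * sw n b) (b + 1) = sval σ b := by
      rw [sval_mul_sw σ hk, if_neg (by omega), if_pos rfl]
    rw [F_unfoldT hb hmin, s1, s2, hgrp]


lemma F_mass (m : ℕ) : ∀ σ : Equiv.Perm (Fin n), invN σ = m → ∑ π, F σ π = 1 := by
  induction m using Nat.strong_induction_on with
  | _ m ih =>
  intro σ hm
  by_cases hσ : σ = 1
  · subst hσ
    simp [F_one]
  · have hd := exists_desc_of_ne_one hσ
    have hb := Nat.find_spec hd
    rw [F_unfoldT hb (fun j hj => Nat.find_min hd hj)]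
    set b := Nat.find hd
    set d : ℕ := sval σ b - sval σ (b + 1) with hdd
    simp only [T]
    rw [Finset.sum_add_distrib, ← Finset.mul_sum, ← Finset.mul_sum]
    have h2 : ∑ π : Equiv.Perm (Fin n), F (σ * sw n b) (π * sw n b) =
        ∑ π : Equiv.Perm (Fin n), F (σ * sw n b) π :=
      Fintype.sum_equiv (Equiv.mulRight (sw n b)) _ _ (fun π => rfl)
    have hN := invN_desc σ hb.1 hb.2
    have h3 := ih (invN (σ * sw n b)) (by omega) (σ * sw n b) rfl
    rw [h2, h3, mul_one, mul_one]
    have h4 : ((d : ℝ) + 1) ≠ 0 := by positivity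
    field_simp
    ring

lemma card_lt_pairs : (univ.filter fun p : Fin n × Fin n => p.1 < p.2).card =
    n * (n - 1) / 2 := by
  rw [Finset.card_eq_sum_card_fiberwise (f := Prod.snd) (t := univ) (fun p _ => mem_univ _)]
  have h1 : ∀ y : Fin n,
      ((univ.filter fun p : Fin n × Fin n => p.1 < p.2).filter fun p => p.snd = y).card
        = (y : ℕ) := by
    intro y
    have : ((univ.filter fun p : Fin n × Fin n => p.1 < p.2).filter fun p => p.snd = y) =
        (Finset.Iio y).image (fun x => (x, y)) := by
      ext ⟨u, v⟩
      simp only [Finset.mem_filter, Finset.mem_univ, true_and, Finset.mem_image,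
        Finset.mem_Iio, Prod.mk.injEq]
      constructor
      · rintro ⟨h1, rfl⟩; exact ⟨u, h1, rfl, rfl⟩
      · rintro ⟨x, hx, rfl, rfl⟩; exact ⟨hx, rfl⟩
    rw [this, Finset.card_image_of_injective _ (fun x1 x2 h => (Prod.mk.injEq _ _ _ _).mp h |>.1),
      Fin.card_Iio]
  rw [Finset.sum_congr rfl (fun y _ => h1 y)]
  rw [Fin.sum_univ_eq_sum_range (fun i => i) n]
  exact Finset.sum_range_id n

lemma invN_rev : invN (reversePerm n) = n * (n - 1) / 2 := by
  unfold invN invSet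
  rw [← card_lt_pairs]
  congr 1
  apply Finset.filter_congr
  intro p _
  constructor
  · rintro ⟨h1, -⟩; exact h1
  · intro h1
    refine ⟨h1, ?_⟩
    show Fin.rev p.2 < Fin.rev p.1
    exact Fin.rev_lt_rev.mpr h1

lemma sval_rev {k : ℕ} (hk : k < n) : sval (reversePerm n) k = n - 1 - k := by
  unfold sval
  rw [dif_pos hk]
  show ((Fin.rev ⟨k, hk⟩ : Fin n) : ℕ) = n - 1 - k
  rw [Fin.val_rev]
  show n - (k + 1) = n - 1 - k
  omega

lemma F_rev_inv {k : ℕ} (hk : k + 1 < n) (π : Equiv.Perm (Fin n)) :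
    F (reversePerm n) π = F (reversePerm n) (π * sw n k) := by
  have hasc : sval (reversePerm n * sw n k) k < sval (reversePerm n * sw n k) (k + 1) := by
    rw [sval_mul_sw _ hk, sval_mul_sw _ hk, if_pos rfl, if_neg (by omega), if_pos rfl,
      sval_rev (by omega), sval_rev (by omega)]
    omega
  have hgap : sval (reversePerm n * sw n k) (k + 1) - sval (reversePerm n * sw n k) k = 1 := by
    rw [sval_mul_sw _ hk, sval_mul_sw _ hk, if_pos rfl, if_neg (by omega), if_pos rfl,
      sval_rev (by omega), sval_rev (by omega)]
    omega
  have h1 := exc (invN (reversePerm n * sw n k)) (reversePerm n * sw n k) rfl k hk hasc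
  rw [hgap] at h1
  have hgrp : reversePerm n * sw n k * sw n k = reversePerm n := by
    rw [mul_assoc, sw_mul_self, mul_one]
  rw [hgrp] at h1
  have h2 := congrFun h1 π
  have h3 := congrFun h1 (π * sw n k)
  simp only [T] at h2 h3
  rw [mul_assoc, sw_mul_self, mul_one] at h3
  rw [h2, h3]
  norm_num
  ring

lemma F_rev_const (m : ℕ) : ∀ π : Equiv.Perm (Fin n), invN π = m →
    F (reversePerm n) π = F (reversePerm n) 1 := by
  induction m using Nat.strong_induction_on with
  | _ m ih =>
  intro π hm
  by_cases hπ : π = 1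
  · rw [hπ]
  · obtain ⟨k, hk⟩ := exists_desc_of_ne_one hπ
    have hN := invN_desc π hk.1 hk.2
    have h1 := ih (invN (π * sw n k)) (by omega) (π * sw n k) rfl
    rw [← F_rev_inv hk.1 π] at h1
    exact h1

lemma F_rev_eq (π : Equiv.Perm (Fin n)) : F (reversePerm n) π = 1 / (n.factorial : ℝ) := by
  have hmass := F_mass (invN (reversePerm n)) (reversePerm n) rfl
  have hconst : ∀ α : Equiv.Perm (Fin n), F (reversePerm n) α = F (reversePerm n) 1 :=
    fun α => F_rev_const (invN α) α rfl
  rw [Finset.sum_congr rfl (fun α _ => hconst α), Finset.sum_const] at hmass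
  have hcard : (univ : Finset (Equiv.Perm (Fin n))).card = n.factorial := by
    rw [← Fintype.card, Fintype.card_perm, Fintype.card_fin]
  rw [hcard, nsmul_eq_mul] at hmass
  rw [hconst π]
  have h2 : (n.factorial : ℝ) ≠ 0 := by positivity
  field_simp at hmass ⊢
  linarith


/-- relate `sval` to application -/
lemma sval_apply (σ : Equiv.Perm (Fin n)) (x : Fin n) : sval σ (x : ℕ) = (σ x : ℕ) := by
  unfold sval
  rw [dif_pos x.2]

lemma sw_eq_swap {x y : Fin n} (h : (y : ℕ) = (x : ℕ) + 1) :
    Equiv.swap x y = sw n (x : ℕ) := by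
  have hxn : (x : ℕ) + 1 < n := h ▸ y.2
  have hy : y = (⟨(x : ℕ) + 1, hxn⟩ : Fin n) := Fin.ext h
  unfold sw
  rw [dif_pos hxn, hy]

lemma invN_one : invN (1 : Equiv.Perm (Fin n)) = 0 := by
  unfold invN invSet
  rw [Finset.card_eq_zero, Finset.filter_eq_empty_iff]
  rintro p -
  rintro ⟨h1, h2⟩
  simp only [Equiv.Perm.one_apply] at h2
  exact absurd h1 (not_lt.mpr (le_of_lt h2))

end ShufA

open ShufA

section Words

variable {n : ℕ}

lemma partialSwaps_take {ℓ : ℕ} (a b : Fin (ℓ + 1) → Fin n) {j : ℕ} (hj : j ≤ ℓ) :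
    partialSwaps a b j = partialSwaps (a ∘ Fin.castSucc) (b ∘ Fin.castSucc) j := by
  unfold partialSwaps
  rw [List.ofFn_succ' (fun i => Equiv.swap (a i) (b i)), List.concat_eq_append,
    List.take_append_of_le_length (by rw [List.length_ofFn]; exact hj)]
  rfl

lemma partialSwaps_full {ℓ : ℕ} (a b : Fin ℓ → Fin n) :
    partialSwaps a b ℓ = (List.ofFn fun i => Equiv.swap (a i) (b i)).prod := by
  unfold partialSwaps
  rw [List.take_of_length_le (by rw [List.length_ofFn])]

lemma partialSwaps_last {ℓ : ℕ} (a b : Fin (ℓ + 1) → Fin n) :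
    partialSwaps a b (ℓ + 1) =
      partialSwaps (a ∘ Fin.castSucc) (b ∘ Fin.castSucc) ℓ *
        Equiv.swap (a (Fin.last ℓ)) (b (Fin.last ℓ)) := by
  rw [partialSwaps_full, partialSwaps_full,
    List.ofFn_succ' (fun i => Equiv.swap (a i) (b i)), List.concat_eq_append,
    List.prod_append]
  simp

lemma partialSwaps_succ_fin {ℓ : ℕ} (a b : Fin ℓ → Fin n) (i : Fin ℓ) :
    partialSwaps a b ((i : ℕ) + 1) = partialSwaps a b i * Equiv.swap (a i) (b i) := by
  unfold partialSwaps
  rw [List.prod_take_succ _ _ (by rw [List.length_ofFn]; exact i.2)]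
  simp

lemma lazyPerm_snoc {ℓ : ℕ} (a b : Fin (ℓ + 1) → Fin n) (ω : Fin ℓ → Bool) (c : Bool) :
    lazyPerm a b (Fin.snoc ω c) =
      lazyPerm (a ∘ Fin.castSucc) (b ∘ Fin.castSucc) ω *
        (if c then Equiv.swap (a (Fin.last ℓ)) (b (Fin.last ℓ)) else 1) := by
  unfold lazyPerm
  rw [List.ofFn_succ'
    (fun i => if (Fin.snoc ω c : Fin (ℓ+1) → Bool) i then Equiv.swap (a i) (b i) else 1),
    List.concat_eq_append, List.prod_append]
  simp only [Fin.snoc_castSucc, Fin.snoc_last, List.prod_cons, List.prod_nil, mul_one]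
  rfl

lemma lazyWeight_snoc {ℓ : ℕ} (p : Fin (ℓ + 1) → ℝ) (ω : Fin ℓ → Bool) (c : Bool) :
    lazyWeight p (Fin.snoc ω c) =
      lazyWeight (p ∘ Fin.castSucc) ω * (if c then p (Fin.last ℓ) else 1 - p (Fin.last ℓ)) := by
  unfold lazyWeight
  rw [Fin.prod_univ_castSucc]
  simp only [Fin.snoc_castSucc, Fin.snoc_last]
  rfl

lemma main_sum (ℓ : ℕ) : ∀ (a b : Fin ℓ → Fin n) (p : Fin ℓ → ℝ),
    (∀ i, (b i : ℕ) = (a i : ℕ) + 1) →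
    (∀ i : Fin ℓ, ((partialSwaps a b i (a i) : Fin n) : ℕ) <
      ((partialSwaps a b i (b i) : Fin n) : ℕ)) →
    (∀ i : Fin ℓ, p i =
      ((((partialSwaps a b i (b i) : Fin n) : ℕ) -
        ((partialSwaps a b i (a i) : Fin n) : ℕ) : ℕ) : ℝ) /
      (((((partialSwaps a b i (b i) : Fin n) : ℕ) -
        ((partialSwaps a b i (a i) : Fin n) : ℕ) : ℕ) : ℝ) + 1)) →
    ∀ α : Equiv.Perm (Fin n),
      (∑ ω : Fin ℓ → Bool, if lazyPerm a b ω = α then lazyWeight p ω else 0) =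
        F (partialSwaps a b ℓ) α := by
  induction ℓ with
  | zero =>
    intro a b p _ _ _ α
    have h1 : lazyPerm a b = fun _ => 1 := by
      funext ω; unfold lazyPerm; simp
    have h2 : partialSwaps a b 0 = 1 := by
      unfold partialSwaps; simp
    have h3 : lazyWeight p (fun _ => false) = 1 := by
      unfold lazyWeight; simp
    haveI : Subsingleton (Fin 0 → Bool) := ⟨fun f g => funext fun i => i.elim0⟩
    rw [h2, F_one, Fintype.sum_subsingleton _ (fun _ => false), h3, h1]
    simp [eq_comm]
  | succ ℓ ih =>
    intro a b p hsim hasc hp α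
    have hpre : ∀ j ≤ ℓ, partialSwaps a b j =
        partialSwaps (a ∘ Fin.castSucc) (b ∘ Fin.castSucc) j :=
      fun j hj => partialSwaps_take a b hj
    have hsim' : ∀ i : Fin ℓ, ((b ∘ Fin.castSucc) i : ℕ) = ((a ∘ Fin.castSucc) i : ℕ) + 1 :=
      fun i => hsim (Fin.castSucc i)
    have hasc' : ∀ i : Fin ℓ,
        ((partialSwaps (a ∘ Fin.castSucc) (b ∘ Fin.castSucc) i ((a ∘ Fin.castSucc) i) : Fin n) : ℕ) <
        ((partialSwaps (a ∘ Fin.castSucc) (b ∘ Fin.castSucc) i ((b ∘ Fin.castSucc) i) : Fin n) : ℕ) := by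
      intro i
      have h0 := hasc (Fin.castSucc i)
      rw [Fin.coe_castSucc, hpre i.val (le_of_lt i.2)] at h0
      exact h0
    have hp' : ∀ i : Fin ℓ, (p ∘ Fin.castSucc) i =
        ((((partialSwaps (a ∘ Fin.castSucc) (b ∘ Fin.castSucc) i ((b ∘ Fin.castSucc) i) : Fin n) : ℕ) -
          ((partialSwaps (a ∘ Fin.castSucc) (b ∘ Fin.castSucc) i ((a ∘ Fin.castSucc) i) : Fin n) : ℕ) : ℕ) : ℝ) /
        (((((partialSwaps (a ∘ Fin.castSucc) (b ∘ Fin.castSucc) i ((b ∘ Fin.castSucc) i) : Fin n) : ℕ) -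
          ((partialSwaps (a ∘ Fin.castSucc) (b ∘ Fin.castSucc) i ((a ∘ Fin.castSucc) i) : Fin n) : ℕ) : ℕ) : ℝ) + 1) := by
      intro i
      have h0 := hp (Fin.castSucc i)
      rw [Fin.coe_castSucc, hpre i.val (le_of_lt i.2)] at h0
      exact h0
    have key := ih (a ∘ Fin.castSucc) (b ∘ Fin.castSucc) (p ∘ Fin.castSucc) hsim' hasc' hp'
    -- sum splitting
    rw [← Equiv.sum_comp
      (⟨fun pr => Fin.snoc pr.1 pr.2, fun ω => (Fin.init ω, ω (Fin.last ℓ)),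
        fun pr => by simp [Fin.init_snoc, Fin.snoc_last],
        fun ω => Fin.snoc_init_self ω⟩ : (Fin ℓ → Bool) × Bool ≃ (Fin (ℓ + 1) → Bool))
      (fun ω => if lazyPerm a b ω = α then lazyWeight p ω else 0),
      Fintype.sum_prod_type]
    simp only [Equiv.coe_fn_mk]
    have htt : Equiv.swap (a (Fin.last ℓ)) (b (Fin.last ℓ)) *
        Equiv.swap (a (Fin.last ℓ)) (b (Fin.last ℓ)) = 1 := Equiv.swap_mul_self _ _
    have hpoint : ∀ ω' : Fin ℓ → Bool,
        (∑ c : Bool, if lazyPerm a b (Fin.snoc ω' c) = α then lazyWeight p (Fin.snoc ω' c) else 0) =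
        (if lazyPerm (a ∘ Fin.castSucc) (b ∘ Fin.castSucc) ω' =
            α * Equiv.swap (a (Fin.last ℓ)) (b (Fin.last ℓ)) then
          lazyWeight (p ∘ Fin.castSucc) ω' else 0) * p (Fin.last ℓ) +
        (if lazyPerm (a ∘ Fin.castSucc) (b ∘ Fin.castSucc) ω' = α then
          lazyWeight (p ∘ Fin.castSucc) ω' else 0) * (1 - p (Fin.last ℓ)) := by
      intro ω'
      have hb2 : ∀ f : Bool → ℝ, ∑ c : Bool, f c = f true + f false := fun f => by simp
      have hsnocT : lazyPerm a b (Fin.snoc ω' true) =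
          lazyPerm (a ∘ Fin.castSucc) (b ∘ Fin.castSucc) ω' *
            Equiv.swap (a (Fin.last ℓ)) (b (Fin.last ℓ)) := by
        rw [lazyPerm_snoc]; simp
      have hsnocF : lazyPerm a b (Fin.snoc ω' false) =
          lazyPerm (a ∘ Fin.castSucc) (b ∘ Fin.castSucc) ω' := by
        rw [lazyPerm_snoc]; simp
      have hwT : lazyWeight p (Fin.snoc ω' true) =
          lazyWeight (p ∘ Fin.castSucc) ω' * p (Fin.last ℓ) := by
        rw [lazyWeight_snoc]; simp
      have hwF : lazyWeight p (Fin.snoc ω' false) =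
          lazyWeight (p ∘ Fin.castSucc) ω' * (1 - p (Fin.last ℓ)) := by
        rw [lazyWeight_snoc]; simp
      have hiff : (lazyPerm (a ∘ Fin.castSucc) (b ∘ Fin.castSucc) ω' *
          Equiv.swap (a (Fin.last ℓ)) (b (Fin.last ℓ)) = α) ↔
          (lazyPerm (a ∘ Fin.castSucc) (b ∘ Fin.castSucc) ω' =
            α * Equiv.swap (a (Fin.last ℓ)) (b (Fin.last ℓ))) := by
        constructor
        · rintro rfl; rw [mul_assoc, htt, mul_one]
        · intro h; rw [h, mul_assoc, htt, mul_one]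
      rw [hb2, hsnocT, hsnocF, hwT, hwF, if_congr hiff rfl rfl]
      split_ifs <;> ring
    rw [Finset.sum_congr rfl (fun ω' _ => hpoint ω'), Finset.sum_add_distrib,
      ← Finset.sum_mul, ← Finset.sum_mul,
      key (α * Equiv.swap (a (Fin.last ℓ)) (b (Fin.last ℓ))), key α, partialSwaps_last]
    -- now the F side
    have hbl : ((b (Fin.last ℓ)) : ℕ) = ((a (Fin.last ℓ)) : ℕ) + 1 := hsim _
    have hkn : ((a (Fin.last ℓ)) : ℕ) + 1 < n := hbl ▸ (b (Fin.last ℓ)).2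
    have hswt : Equiv.swap (a (Fin.last ℓ)) (b (Fin.last ℓ)) = sw n ((a (Fin.last ℓ)) : ℕ) :=
      sw_eq_swap hbl
    have hsval1 : sval (partialSwaps a b ℓ) ((a (Fin.last ℓ)) : ℕ) =
        ((partialSwaps a b ℓ) (a (Fin.last ℓ)) : ℕ) := sval_apply _ _
    have hsval2 : sval (partialSwaps a b ℓ) (((a (Fin.last ℓ)) : ℕ) + 1) =
        ((partialSwaps a b ℓ) (b (Fin.last ℓ)) : ℕ) := by
      rw [← hbl]; exact sval_apply _ _
    have hascl : sval (partialSwaps a b ℓ) ((a (Fin.last ℓ)) : ℕ) <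
        sval (partialSwaps a b ℓ) (((a (Fin.last ℓ)) : ℕ) + 1) := by
      rw [hsval1, hsval2]
      exact hasc (Fin.last ℓ)
    have hexc := exc (invN (partialSwaps a b ℓ)) (partialSwaps a b ℓ) rfl
      ((a (Fin.last ℓ)) : ℕ) hkn hascl
    rw [← hpre ℓ le_rfl, hswt, hexc]
    show _ = (1 / (((sval (partialSwaps a b ℓ) (((a (Fin.last ℓ)) : ℕ) + 1) -
        sval (partialSwaps a b ℓ) ((a (Fin.last ℓ)) : ℕ) : ℕ) : ℝ) + 1)) *
        F (partialSwaps a b ℓ) α +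
      (((sval (partialSwaps a b ℓ) (((a (Fin.last ℓ)) : ℕ) + 1) -
        sval (partialSwaps a b ℓ) ((a (Fin.last ℓ)) : ℕ) : ℕ) : ℝ) /
        (((sval (partialSwaps a b ℓ) (((a (Fin.last ℓ)) : ℕ) + 1) -
        sval (partialSwaps a b ℓ) ((a (Fin.last ℓ)) : ℕ) : ℕ) : ℝ) + 1)) *
        F (partialSwaps a b ℓ) (α * sw n ((a (Fin.last ℓ)) : ℕ))
    rw [hsval1, hsval2]
    have hplast := hp (Fin.last ℓ)
    rw [show ((Fin.last ℓ : Fin (ℓ+1)) : ℕ) = ℓ from rfl] at hplast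
    rw [hplast]
    set D : ℕ := ((partialSwaps a b ℓ) (b (Fin.last ℓ)) : ℕ) -
      ((partialSwaps a b ℓ) (a (Fin.last ℓ)) : ℕ) with hD
    have hD0 : ((D : ℝ) + 1) ≠ 0 := by positivity
    field_simp
    ring

end Words

section Final

variable {n : ℕ}

lemma partialSwaps_zero {ℓ : ℕ} (a b : Fin ℓ → Fin n) : partialSwaps a b 0 = 1 := by
  unfold partialSwaps; simp

theorem constructionA_isTranspositionShuffle' (n ℓ : ℕ) (hn : 1 ≤ n)
    (hl : ℓ = n * (n - 1) / 2)
    (a b : Fin ℓ → Fin n) (hsimple : ∀ i, (b i : ℕ) = (a i : ℕ) + 1)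
    (hword : (List.ofFn fun i => Equiv.swap (a i) (b i)).prod = reversePerm n)
    (p : Fin ℓ → ℝ)
    (hp : ∀ j : Fin ℓ,
      p j = (((partialSwaps a b j (b j) : Fin n) : ℝ) - ((partialSwaps a b j (a j) : Fin n) : ℝ)) /
        ((((partialSwaps a b j (b j) : Fin n) : ℝ) - ((partialSwaps a b j (a j) : Fin n) : ℝ)) + 1)) :
    IsTranspositionShuffle n ℓ a b p := by
  have hfullP : partialSwaps a b ℓ = reversePerm n := by
    rw [partialSwaps_full]; exact hword
  have hNrevl : invN (reversePerm n) = ℓ := by rw [invN_rev, hl]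
  -- single-step inversion count change
  have hstep : ∀ j, (hj : j < ℓ) →
      invN (partialSwaps a b (j + 1)) = invN (partialSwaps a b j) + 1 ∨
      invN (partialSwaps a b (j + 1)) + 1 = invN (partialSwaps a b j) := by
    intro j hj
    set i : Fin ℓ := ⟨j, hj⟩ with hi
    have hk1 : ((a i) : ℕ) + 1 < n := (hsimple i) ▸ (b i).2
    have hrw : partialSwaps a b (j + 1) = partialSwaps a b j * sw n ((a i) : ℕ) := by
      have h0 := partialSwaps_succ_fin a b i
      rw [sw_eq_swap (hsimple i)] at h0
      exact h0
    have hne : sval (partialSwaps a b j) ((a i) : ℕ) ≠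
        sval (partialSwaps a b j) (((a i) : ℕ) + 1) := by
      intro h
      have := sval_inj (partialSwaps a b j) (by omega) hk1 h
      omega
    rcases lt_or_gt_of_ne hne with h | h
    · left; rw [hrw]; exact invN_asc _ hk1 h
    · right; rw [hrw]; exact invN_desc _ hk1 h
  have hup : ∀ j, j ≤ ℓ → invN (partialSwaps a b j) ≤ j := by
    intro j
    induction j with
    | zero => intro _; rw [partialSwaps_zero, invN_one]
    | succ j ihj =>
      intro hj
      have h1 := ihj (by omega)
      rcases hstep j (by omega) with h | h <;> omega
  have hdown : ∀ m j, j + m = ℓ → ℓ ≤ invN (partialSwaps a b j) + m := by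
    intro m
    induction m with
    | zero =>
      intro j hj
      have hj' : j = ℓ := by omega
      subst hj'
      rw [hfullP, hNrevl]
      omega
    | succ m ihm =>
      intro j hj
      have h2 := ihm (j + 1) (by omega)
      rcases hstep j (by omega) with h | h <;> omega
  have heq : ∀ j, j ≤ ℓ → invN (partialSwaps a b j) = j := by
    intro j hj
    have h1 := hup j hj
    have h2 := hdown (ℓ - j) j (by omega)
    omega
  -- every step is an ascent
  have hascv : ∀ i : Fin ℓ, sval (partialSwaps a b i) ((a i) : ℕ) <
      sval (partialSwaps a b i) (((a i) : ℕ) + 1) := by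
    intro i
    have hk1 : ((a i) : ℕ) + 1 < n := (hsimple i) ▸ (b i).2
    have hrw : partialSwaps a b ((i : ℕ) + 1) = partialSwaps a b (i : ℕ) * sw n ((a i) : ℕ) := by
      have h0 := partialSwaps_succ_fin a b i
      rw [sw_eq_swap (hsimple i)] at h0
      exact h0
    have h1 := heq (i : ℕ) (le_of_lt i.2)
    have h2 := heq ((i : ℕ) + 1) i.2
    by_contra hcon
    push_neg at hcon
    have hne : sval (partialSwaps a b (i : ℕ)) (((a i) : ℕ) + 1) ≠
        sval (partialSwaps a b (i : ℕ)) ((a i) : ℕ) := by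
      intro h
      have := sval_inj (partialSwaps a b (i : ℕ)) hk1 (by omega) h
      omega
    have hdesc : sval (partialSwaps a b (i : ℕ)) (((a i) : ℕ) + 1) <
        sval (partialSwaps a b (i : ℕ)) ((a i) : ℕ) := lt_of_le_of_ne hcon hne
    have h3 := invN_desc (partialSwaps a b (i : ℕ)) hk1 hdesc
    rw [← hrw] at h3
    omega
  have hascfin : ∀ i : Fin ℓ, ((partialSwaps a b i (a i) : Fin n) : ℕ) <
      ((partialSwaps a b i (b i) : Fin n) : ℕ) := by
    intro i
    have h0 := hascv i
    rw [← hsimple i, sval_apply, sval_apply] at h0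
    exact h0
  have hpmain : ∀ i : Fin ℓ, p i =
      ((((partialSwaps a b i (b i) : Fin n) : ℕ) -
        ((partialSwaps a b i (a i) : Fin n) : ℕ) : ℕ) : ℝ) /
      (((((partialSwaps a b i (b i) : Fin n) : ℕ) -
        ((partialSwaps a b i (a i) : Fin n) : ℕ) : ℕ) : ℝ) + 1) := by
    intro i
    rw [hp i, Nat.cast_sub (le_of_lt (hascfin i))]
  refine ⟨?_, ?_, ?_⟩
  · intro i h
    have h1 := hsimple i
    rw [h] at h1
    omega
  · intro i
    rw [hpmain i]
    constructor
    · positivity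
    · rw [div_le_one (by positivity)]
      linarith [Nat.cast_nonneg (α := ℝ)
        (((partialSwaps a b i (b i) : Fin n) : ℕ) - ((partialSwaps a b i (a i) : Fin n) : ℕ))]
  · intro α
    rw [Finset.sum_filter, main_sum ℓ a b p hsimple hascfin hpmain α, hfullP, F_rev_eq]

end Final

/-- if `(aᵢ)` is a reduced word of order `n` (encoded by its simple
transpositions, swapping adjacent positions `a i` and `b i = a i + 1`, whose composition
is the reverse permutation, with `ℓ = n(n-1)/2`), and the probabilities are those of
Construction A, `p_j = (v_j - u_j)/(v_j - u_j + 1)` where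
`(u_j, v_j) = (σ_{j-1}(a_j), σ_{j-1}(a_j+1))`, then `(aᵢ, aᵢ+1, pᵢ)ᵢ` is a (simple)
transposition shuffle of order `n`. -/
theorem constructionA_isTranspositionShuffle (n ℓ : ℕ) (hn : 1 ≤ n)
    (hl : ℓ = n * (n - 1) / 2)
    (a b : Fin ℓ → Fin n) (hsimple : ∀ i, (b i : ℕ) = (a i : ℕ) + 1)
    (hword : (List.ofFn fun i => Equiv.swap (a i) (b i)).prod = reversePerm n)
    (p : Fin ℓ → ℝ)
    (hp : ∀ j : Fin ℓ,
      p j = (((partialSwaps a b j (b j) : Fin n) : ℝ) - ((partialSwaps a b j (a j) : Fin n) : ℝ)) /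
        ((((partialSwaps a b j (b j) : Fin n) : ℝ) - ((partialSwaps a b j (a j) : Fin n) : ℝ)) + 1)) :
    IsTranspositionShuffle n ℓ a b p :=
  constructionA_isTranspositionShuffle' n ℓ hn hl a b hsimple hword p hp
end

section
/- For n ≥ 2, every simple transposition shuffle of order n has length at least n(n-1)/2. -/
open Finset

/-! Every permutation has positive probability under a transposition shuffle, so the reversal
of `Fin n` is a product of at most `ℓ` adjacent transpositions. Multiplying by an adjacent
transposition creates at most one new inversion, while the reversal has `n.choose 2` inversions. -/

namespace Equiv.Perm

variable {α : Type*} [LinearOrder α]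

theorem swap_apply_lt_swap_apply_of_covBy {k k' x y : α} (hk : k ⋖ k') (hxy : x < y)
    (hne : (x, y) ≠ (k, k')) : swap k k' x < swap k k' y := by
  have hx := @hk.2 x
  have hy := @hk.2 y
  simp only [swap_apply_def, ne_eq, Prod.mk.injEq] at hne ⊢
  split_ifs <;> grind [hk.1]

variable [Fintype α]

def inversions (π : Perm α) : Finset (α × α) :=
  {q | q.1 < q.2 ∧ π q.2 < π q.1}

@[simp]
theorem mem_inversions {π : Perm α} {q : α × α} :
    q ∈ inversions π ↔ q.1 < q.2 ∧ π q.2 < π q.1 := by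
  simp [inversions]

@[simp]
theorem inversions_one : inversions (1 : Perm α) = ∅ := by
  ext q
  simpa using le_of_lt

theorem inversions_swap_mul_subset {k k' : α} (hk : k ⋖ k') (π : Perm α) :
    inversions (swap k k' * π) ⊆ insert (π⁻¹ k, π⁻¹ k') (inversions π) := by
  rintro ⟨x, y⟩ hq
  rw [mem_inversions] at hq
  obtain ⟨hxy, hswap⟩ := hq
  rw [mem_insert, mem_inversions]
  by_contra! hnot
  have hlt : π x < π y := (hnot.2 hxy).lt_of_ne (π.injective.ne hxy.ne)
  have hne : (π x, π y) ≠ (k, k') := by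
    simpa [Prod.ext_iff, Equiv.eq_symm_apply] using hnot.1
  exact (swap_apply_lt_swap_apply_of_covBy hk hlt hne).not_gt hswap

theorem card_inversions_swap_mul_le {k k' : α} (hk : k ⋖ k') (π : Perm α) :
    #(inversions (swap k k' * π)) ≤ #(inversions π) + 1 :=
  (card_le_card (inversions_swap_mul_subset hk π)).trans (card_insert_le _ _)

theorem card_inversions_list_prod_le (L : List (Perm α))
    (hL : ∀ σ ∈ L, σ = 1 ∨ ∃ k k', k ⋖ k' ∧ σ = swap k k') :
    #(inversions L.prod) ≤ L.length := by
  induction L with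
  | nil => simp
  | cons σ L ih =>
    rw [List.forall_mem_cons] at hL
    have ih := ih hL.2
    rw [List.prod_cons, List.length_cons]
    rcases hL.1 with rfl | ⟨k, k', hk, rfl⟩
    · rw [one_mul]
      exact ih.trans (Nat.le_succ _)
    · grw [card_inversions_swap_mul_le hk, ih]

end Equiv.Perm

open Equiv.Perm

theorem inversions_revPerm (n : ℕ) :
    inversions (Fin.revPerm : Equiv.Perm (Fin n)) =
      ({q | q.1 < q.2} : Finset (Fin n × Fin n)) := by
  ext q
  simp only [mem_inversions, Fin.revPerm_apply, Fin.rev_lt_rev, mem_filter, mem_univ, true_and]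
  exact and_iff_left_of_imp id

theorem card_inversions_revPerm (n : ℕ) :
    #(inversions (Fin.revPerm : Equiv.Perm (Fin n))) = n.choose 2 := by
  simpa [inversions_revPerm] using Fintype.card_product_filter_lt (α := Fin n)

theorem card_inversions_lazyPerm_le {n ℓ : ℕ} {a b : Fin ℓ → Fin n}
    (hab : ∀ i, a i ⋖ b i) (ω : Fin ℓ → Bool) : #(inversions (lazyPerm a b ω)) ≤ ℓ := by
  unfold lazyPerm
  simpa using card_inversions_list_prod_le _ <| List.forall_mem_ofFn_iff.mpr fun i => by
    cases ω i
    · exact .inl rfl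
    · exact .inr ⟨a i, b i, hab i, rfl⟩

theorem IsTranspositionShuffle.exists_lazyPerm_eq {n ℓ : ℕ} {a b : Fin ℓ → Fin n}
    {p : Fin ℓ → ℝ} (h : IsTranspositionShuffle n ℓ a b p) (α : Equiv.Perm (Fin n)) :
    ∃ ω, lazyPerm a b ω = α := by
  have hsum : ∑ ω ∈ univ.filter fun ω => lazyPerm a b ω = α, lazyWeight p ω ≠ 0 := by
    rw [h.2.2 α]
    positivity
  obtain ⟨ω, hω, -⟩ := exists_ne_zero_of_sum_ne_zero hsum
  exact ⟨ω, (mem_filter.mp hω).2⟩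

theorem simple_shuffle_length_lower_bound_general (n ℓ : ℕ)
    (a b : Fin ℓ → Fin n) (p : Fin ℓ → ℝ)
    (hsimple : ∀ i, (b i : ℕ) = (a i : ℕ) + 1)
    (h : IsTranspositionShuffle n ℓ a b p) :
    n * (n - 1) / 2 ≤ ℓ := by
  obtain ⟨ω, hω⟩ := h.exists_lazyPerm_eq Fin.revPerm
  have hadj (i : Fin ℓ) : a i ⋖ b i :=
    Fin.covBy_iff.mpr <| Nat.covBy_iff_add_one_eq.mpr (hsimple i).symm
  rw [← Nat.choose_two_right, ← card_inversions_revPerm, ← hω]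
  exact card_inversions_lazyPerm_le hadj ω

/-- for `n ≥ 2`, every simple transposition shuffle of order `n`
(one with `bᵢ = aᵢ + 1` for all `i`) has length at least `n(n-1)/2`. -/
theorem simple_shuffle_length_lower_bound (n ℓ : ℕ) (hn : 2 ≤ n)
    (a b : Fin ℓ → Fin n) (p : Fin ℓ → ℝ)
    (hsimple : ∀ i, (b i : ℕ) = (a i : ℕ) + 1)
    (h : IsTranspositionShuffle n ℓ a b p) :
    n * (n - 1) / 2 ≤ ℓ :=
  simple_shuffle_length_lower_bound_general n ℓ a b p hsimple h
end

section
/- In any transposition shuffle S = (a_i, b_i, p_i)_{i=1}^ℓ of order n, the number of indices i with p_i = 1/2 is at least n - 1. -/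
/-!
Let `Sₙ` act on `ℝⁿ` by permuting coordinates. The expected permutation matrix of the shuffle
factors as the product of the one-step matrices `pᵢ T_{aᵢbᵢ} + (1 - pᵢ) I`; uniformity of the
shuffle makes it `(1/n!) ∑_σ P_σ`, whose range is the line of constant vectors, so its kernel has
dimension at least `n - 1`. Nullity is subadditive under composition, and the kernel of
`q T_{cd} + (1 - q) I` lies on the line through `e_c - e_d`, on which the operator acts as
`1 - 2q`: so it is trivial unless `q = 1/2`.
-/

open Finset

open Module LinearMap

section PermRep

variable (K : Type*) [Field K] {α : Type*}

def permRep : Equiv.Perm α →* Module.End K (α → K) where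
  toFun σ := funLeft K K ⇑σ⁻¹
  map_one' := rfl
  map_mul' _ _ := by ext; simp [Module.End.mul_apply]

variable {K}

@[simp] theorem permRep_apply (σ : Equiv.Perm α) (v : α → K) (x : α) :
    permRep K σ v x = v (σ⁻¹ x) := rfl

variable [Fintype α] [DecidableEq α]

theorem sum_permRep_apply_eq (v : α → K) (x y : α) :
    (∑ σ, permRep K σ) v x = (∑ σ, permRep K σ) v y := by
  simp only [LinearMap.sum_apply, Finset.sum_apply, permRep_apply]
  exact Fintype.sum_equiv (Equiv.mulLeft (Equiv.swap x y)) _ _ fun σ => by simp [mul_inv_rev]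

theorem finrank_range_sum_permRep_le_one :
    finrank K (range (∑ σ : Equiv.Perm α, permRep K σ)) ≤ 1 := by
  have hconst : range (∑ σ : Equiv.Perm α, permRep K σ) ≤ K ∙ fun _ => 1 := by
    rintro _ ⟨v, rfl⟩
    cases isEmpty_or_nonempty α with
    | inl _ => exact Subsingleton.elim ((∑ σ, permRep K σ) v) 0 ▸ zero_mem _
    | inr h =>
      obtain ⟨x⟩ := h
      refine Submodule.mem_span_singleton.mpr ⟨(∑ σ, permRep K σ) v x, funext fun y => ?_⟩
      simp [sum_permRep_apply_eq v x y]
  refine (Submodule.finrank_mono hconst).trans ?_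
  simpa using finrank_span_le_card ({fun _ => 1} : Set (α → K))

end PermRep

section LazySwap

variable {K : Type*} [Field K] {α : Type*} [DecidableEq α]

def lazySwap (c d : α) (q : K) : Module.End K (α → K) :=
  q • permRep K (Equiv.swap c d) + (1 - q) • 1

theorem lazySwap_apply (c d : α) (q : K) (v : α → K) (x : α) :
    lazySwap c d q v x = q * v (Equiv.swap c d x) + (1 - q) * v x := by
  simp [lazySwap, Equiv.swap_inv]

theorem ker_lazySwap_le_span (c d : α) (q : K) :
    ker (lazySwap c d q) ≤ K ∙ (Pi.single c 1 - Pi.single d 1) := by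
  intro v hv
  have hv' (x : α) : q * v (Equiv.swap c d x) + (1 - q) * v x = 0 := by
    rw [← lazySwap_apply]; exact congrFun hv x
  have hfix (x : α) (hx : Equiv.swap c d x = x) : v x = 0 := by
    have h := hv' x
    rw [hx] at h
    linear_combination h
  refine Submodule.mem_span_singleton.mpr ⟨v c, funext fun x => ?_⟩
  by_cases hcd : c = d
  · subst hcd; simp [hfix x (by simp)]
  have hsum : v c + v d = 0 := by
    have hc := hv' c
    have hd := hv' d
    rw [Equiv.swap_apply_left] at hc
    rw [Equiv.swap_apply_right] at hd
    linear_combination hc + hd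
  by_cases hxc : x = c
  · simp [hxc, Ne.symm hcd]
  by_cases hxd : x = d
  · simp [hxd, hcd, eq_neg_of_add_eq_zero_right hsum]
  · simp [hxc, hxd, hfix x (Equiv.swap_apply_of_ne_of_ne hxc hxd)]

theorem finrank_ker_lazySwap_le_one (c d : α) (q : K) : finrank K (ker (lazySwap c d q)) ≤ 1 :=
  (Submodule.finrank_mono (ker_lazySwap_le_span c d q)).trans <| by
    simpa using finrank_span_le_card ({Pi.single c 1 - Pi.single d 1} : Set (α → K))

theorem ker_lazySwap_eq_bot (c d : α) (q : K) (hq : 2 * q ≠ 1) : ker (lazySwap c d q) = ⊥ := by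
  refine eq_bot_iff.mpr fun v hv => ?_
  obtain ⟨t, rfl⟩ := Submodule.mem_span_singleton.mp (ker_lazySwap_le_span c d q hv)
  by_cases hcd : c = d
  · simp [hcd]
  have h := congrFun (mem_ker.mp hv) c
  simp only [lazySwap_apply, Equiv.swap_apply_left, Pi.smul_apply, Pi.sub_apply, smul_eq_mul,
    Pi.single_eq_same, Pi.single_eq_of_ne hcd, Pi.single_eq_of_ne' hcd, Pi.zero_apply] at h
  have ht : t = 0 := by
    have h' : (1 - 2 * q) * t = 0 := by linear_combination h
    exact (mul_eq_zero.mp h').resolve_left (sub_ne_zero.mpr hq.symm)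
  simp [ht]

end LazySwap

section Nullity

variable {K V : Type*} [Field K] [AddCommGroup V] [Module K V] [FiniteDimensional K V]

theorem finrank_ker_mul_le (f g : Module.End K V) :
    finrank K (ker (f * g)) ≤ finrank K (ker f) + finrank K (ker g) := by
  have h := LinearMap.lift_rank_comap_le (f := g) (ker f)
  rw [← ker_comp] at h
  simp only [Cardinal.lift_id, ← finrank_eq_rank] at h
  exact_mod_cast h

theorem finrank_ker_list_prod_le (L : List (Module.End K V)) :
    finrank K (ker L.prod) ≤ (L.map fun f => finrank K (ker f)).sum := by
  induction L with
  | nil => rw [List.prod_nil, Module.End.one_eq_id, ker_id, finrank_bot]; exact Nat.zero_le _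
  | cons f L ih =>
    rw [List.prod_cons, List.map_cons, List.sum_cons]
    exact (finrank_ker_mul_le f L.prod).trans (Nat.add_le_add_left ih _)

end Nullity

theorem sum_prod_ofFn_ite {A : Type*} [Semiring A] {ℓ : ℕ} (x y : Fin ℓ → A) :
    ∑ ω : Fin ℓ → Bool, (List.ofFn fun i => if ω i then x i else y i).prod =
      (List.ofFn fun i => x i + y i).prod := by
  induction ℓ with
  | zero => simp
  | succ ℓ ih =>
    rw [← (Fin.consEquiv fun _ => Bool).sum_comp, Fintype.sum_prod_type, Fintype.sum_bool]
    simp only [Fin.consEquiv_apply, List.ofFn_succ, Fin.cons_zero, Fin.cons_succ, List.prod_cons,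
      if_true, Bool.false_eq_true, if_false, ← mul_sum, ih, add_mul]

theorem prod_ofFn_smul {R A : Type*} [CommSemiring R] [Semiring A] [Algebra R A] {ℓ : ℕ}
    (c : Fin ℓ → R) (x : Fin ℓ → A) :
    (List.ofFn fun i => c i • x i).prod = (∏ i, c i) • (List.ofFn x).prod := by
  induction ℓ with
  | zero => simp
  | succ ℓ ih =>
    simp only [List.ofFn_succ, List.prod_cons, Fin.prod_univ_succ, ih, smul_mul_smul_comm]

theorem sum_lazyWeight_smul_eq_prod {A : Type*} [Semiring A] [Algebra ℝ A] {n ℓ : ℕ}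
    (ρ : Equiv.Perm (Fin n) →* A) (a b : Fin ℓ → Fin n) (p : Fin ℓ → ℝ) :
    ∑ ω, lazyWeight p ω • ρ (lazyPerm a b ω) =
      (List.ofFn fun i => p i • ρ (Equiv.swap (a i) (b i)) + (1 - p i) • 1).prod := by
  rw [← sum_prod_ofFn_ite]
  refine Fintype.sum_congr _ _ fun ω => ?_
  rw [lazyWeight, lazyPerm, map_list_prod, List.map_ofFn, ← prod_ofFn_smul]
  congr 1
  refine List.ofFn_inj.mpr (funext fun i => ?_)
  cases hωi : ω i <;> simp [hωi]

theorem IsTranspositionShuffle.sum_lazyWeight_smul {M : Type*} [AddCommMonoid M] [Module ℝ M]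
    {n ℓ : ℕ} {a b : Fin ℓ → Fin n} {p : Fin ℓ → ℝ} (h : IsTranspositionShuffle n ℓ a b p)
    (f : Equiv.Perm (Fin n) → M) :
    ∑ ω, lazyWeight p ω • f (lazyPerm a b ω) = (1 / (n.factorial : ℝ)) • ∑ σ, f σ := by
  rw [← Finset.sum_fiberwise univ (lazyPerm a b), smul_sum]
  refine Fintype.sum_congr _ _ fun σ => ?_
  rw [← h.2.2 σ, sum_smul]
  exact sum_congr rfl fun ω hω => by rw [(mem_filter.mp hω).2]

/-- in any transposition shuffle of order `n`, the number of indices `i`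
with `pᵢ = 1/2` is at least `n - 1`. -/
theorem shuffle_count_half (n ℓ : ℕ) (a b : Fin ℓ → Fin n) (p : Fin ℓ → ℝ)
    (h : IsTranspositionShuffle n ℓ a b p) :
    n - 1 ≤ (univ.filter fun i : Fin ℓ => p i = 1 / 2).card := by
  set L := List.ofFn fun i => lazySwap (K := ℝ) (a i) (b i) (p i)
  have hprod : L.prod = (1 / (n.factorial : ℝ)) • ∑ σ, permRep ℝ σ := by
    rw [← h.sum_lazyWeight_smul, sum_lazyWeight_smul_eq_prod]
    rfl
  have hrange : finrank ℝ (range L.prod) ≤ 1 := by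
    rw [hprod]
    exact (Submodule.finrank_mono (range_smul_le_range _ _)).trans
      finrank_range_sum_permRep_le_one
  have hker : finrank ℝ (ker L.prod) ≤ #{i | p i = 1 / 2} := by
    refine (finrank_ker_list_prod_le L).trans ?_
    rw [List.map_ofFn, List.sum_ofFn, card_filter]
    refine sum_le_sum fun i _ => ?_
    rw [Function.comp_apply]
    split_ifs with hpi
    · exact finrank_ker_lazySwap_le_one (a i) (b i) (p i)
    · rw [ker_lazySwap_eq_bot (a i) (b i) (p i) fun h2 => hpi (by linarith), finrank_bot]
  have hrank_nullity := L.prod.finrank_range_add_finrank_ker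
  rw [finrank_fin_fun] at hrank_nullity
  omega
end

section
/- Let S = (a_i, b_i, p_i)_{i=1}^ℓ be a transposition shuffle of order n ≥ 2 whose length ℓ is minimal, i.e., every transposition shuffle of order n has length at least ℓ. Then p_1 = 1/2 and p_ℓ = 1/2. -/
open Finset

/-!
Conditioning on the first step, the law `μ` of the remaining shuffle satisfies
`(1 - p₁) μ(α) + p₁ μ(s α) = 1/n!` for every `α`, where `s` is the first transposition.
Comparing this identity at `α` and `s α` gives `(1 - 2p₁)(μ(α) - μ(s α)) = 0`, so if `p₁ ≠ 1/2`
then `μ` is uniform and dropping the first step leaves a shorter shuffle. Reversing the sequence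
inverts the permutation, which preserves uniformity, and turns the last step into the first.
-/

open Equiv

lemma List.ofFn_comp_rev {α : Type*} {m : ℕ} (f : Fin m → α) :
    List.ofFn (f ∘ Fin.rev) = (List.ofFn f).reverse := by
  refine List.ext_getElem (by simp) fun i _ _ => ?_
  simp only [List.getElem_ofFn, Function.comp_apply, List.getElem_reverse, List.length_ofFn]
  congr 1
  ext
  simp only [Fin.val_rev]
  omega

section LazyShuffle

variable {n ℓ : ℕ}

/-- The last clause of `IsTranspositionShuffle` is, by definition,
`∀ α, lazyProb a b p α = 1 / n!`. -/
def lazyProb (a b : Fin ℓ → Fin n) (p : Fin ℓ → ℝ) (α : Perm (Fin n)) : ℝ :=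
  ∑ ω ∈ univ.filter fun ω => lazyPerm a b ω = α, lazyWeight p ω

lemma lazyPerm_cons (a b : Fin (ℓ + 1) → Fin n) (x : Bool) (ω : Fin ℓ → Bool) :
    lazyPerm a b (Fin.cons x ω) =
      (if x then swap (a 0) (b 0) else 1) * lazyPerm (Fin.tail a) (Fin.tail b) ω := by
  simp [lazyPerm, List.ofFn_succ, Fin.tail]

lemma lazyWeight_cons (p : Fin (ℓ + 1) → ℝ) (x : Bool) (ω : Fin ℓ → Bool) :
    lazyWeight p (Fin.cons x ω) = (if x then p 0 else 1 - p 0) * lazyWeight (Fin.tail p) ω := by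
  simp [lazyWeight, Fin.prod_univ_succ, Fin.tail]

lemma lazyProb_cons (a b : Fin (ℓ + 1) → Fin n) (p : Fin (ℓ + 1) → ℝ) (α : Perm (Fin n)) :
    lazyProb a b p α =
      (1 - p 0) * lazyProb (Fin.tail a) (Fin.tail b) (Fin.tail p) α +
        p 0 * lazyProb (Fin.tail a) (Fin.tail b) (Fin.tail p) (swap (a 0) (b 0) * α) := by
  simp only [lazyProb, sum_filter, mul_sum]
  rw [← (Fin.consEquiv fun _ => Bool).sum_comp, Fintype.sum_prod_type, Fintype.sum_bool, add_comm]
  congr 1 <;> refine sum_congr rfl fun ω _ => ?_ <;>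
    simp [Fin.consEquiv, lazyPerm_cons, lazyWeight_cons, mul_ite, ← eq_inv_mul_iff_mul_eq]

lemma lazyPerm_rev (a b : Fin ℓ → Fin n) (ω : Fin ℓ → Bool) :
    lazyPerm (a ∘ Fin.rev) (b ∘ Fin.rev) ω = (lazyPerm a b (ω ∘ Fin.rev))⁻¹ := by
  rw [lazyPerm, lazyPerm, List.prod_inv_reverse, List.map_ofFn, ← List.ofFn_comp_rev]
  congr 2
  ext i : 1
  simp [apply_ite (·⁻¹)]

lemma lazyWeight_rev (p : Fin ℓ → ℝ) (ω : Fin ℓ → Bool) :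
    lazyWeight (p ∘ Fin.rev) ω = lazyWeight p (ω ∘ Fin.rev) :=
  Fintype.prod_equiv Fin.revPerm _ _ fun i => by simp

lemma lazyProb_rev (a b : Fin ℓ → Fin n) (p : Fin ℓ → ℝ) (α : Perm (Fin n)) :
    lazyProb (a ∘ Fin.rev) (b ∘ Fin.rev) (p ∘ Fin.rev) α = lazyProb a b p α⁻¹ := by
  simp only [lazyProb, sum_filter]
  refine Fintype.sum_equiv
    (Function.Involutive.toPerm (· ∘ Fin.rev) fun ω => by ext; simp) _ _ fun ω => ?_
  simp only [lazyPerm_rev, inv_eq_iff_eq_inv, lazyWeight_rev]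
  rfl

end LazyShuffle

lemma Function.Involutive.eq_of_weighted_avg_eq {α : Type*} {T : α → α}
    (hT : Function.Involutive T) {μ : α → ℝ} {p c : ℝ} (hp : p ≠ 1 / 2)
    (h : ∀ x, (1 - p) * μ x + p * μ (T x) = c) (x : α) : μ x = c := by
  have hx := h x
  have hTx := h (T x)
  rw [hT x] at hTx
  have : (1 - 2 * p) * μ x = (1 - 2 * p) * μ (T x) := by linarith
  have : μ x = μ (T x) := mul_left_cancel₀ (fun h0 => hp (by linarith)) this
  linarith

namespace IsTranspositionShuffle

variable {n ℓ : ℕ} {a b : Fin ℓ → Fin n} {p : Fin ℓ → ℝ}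

lemma rev (h : IsTranspositionShuffle n ℓ a b p) :
    IsTranspositionShuffle n ℓ (a ∘ Fin.rev) (b ∘ Fin.rev) (p ∘ Fin.rev) :=
  ⟨fun _ => h.1 _, fun _ => h.2.1 _, fun α => (lazyProb_rev a b p α).trans (h.2.2 α⁻¹)⟩

lemma tail {a b : Fin (ℓ + 1) → Fin n} {p : Fin (ℓ + 1) → ℝ}
    (h : IsTranspositionShuffle n (ℓ + 1) a b p) (hp : p 0 ≠ 1 / 2) :
    IsTranspositionShuffle n ℓ (Fin.tail a) (Fin.tail b) (Fin.tail p) := by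
  have hs : Function.Involutive (swap (a 0) (b 0) * ·) := swap_mul_self_mul _ _
  exact ⟨fun i => h.1 i.succ, fun i => h.2.1 i.succ,
    hs.eq_of_weighted_avg_eq hp fun α => (lazyProb_cons a b p α).symm.trans (h.2.2 α)⟩

lemma head_eq_half {a b : Fin (ℓ + 1) → Fin n} {p : Fin (ℓ + 1) → ℝ}
    (h : IsTranspositionShuffle n (ℓ + 1) a b p)
    (hmin : ∀ a' b' p', ¬ IsTranspositionShuffle n ℓ a' b' p') : p 0 = 1 / 2 :=
  by_contra fun hp => hmin _ _ _ (h.tail hp)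

end IsTranspositionShuffle

theorem minimal_shuffle_first_last_half_general (n ℓ : ℕ)
    (a b : Fin ℓ → Fin n) (p : Fin ℓ → ℝ)
    (h : IsTranspositionShuffle n ℓ a b p)
    (hmin : ∀ (ℓ' : ℕ) (a' b' : Fin ℓ' → Fin n) (p' : Fin ℓ' → ℝ),
      IsTranspositionShuffle n ℓ' a' b' p' → ℓ ≤ ℓ') :
    ∀ h0 : 0 < ℓ,
      p ⟨0, h0⟩ = 1 / 2 ∧ p ⟨ℓ - 1, Nat.sub_lt h0 Nat.one_pos⟩ = 1 / 2 := by
  intro h0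
  obtain ⟨m, rfl⟩ : ∃ m, ℓ = m + 1 := ⟨ℓ - 1, by omega⟩
  have no_shorter : ∀ a' b' p', ¬ IsTranspositionShuffle n m a' b' p' := fun a' b' p' hs => by
    have := hmin m a' b' p' hs
    omega
  exact ⟨h.head_eq_half no_shorter, h.rev.head_eq_half no_shorter⟩

/-- if `(aᵢ, bᵢ, pᵢ)ᵢ` is a transposition shuffle of order `n ≥ 2` of minimal
length (every transposition shuffle of order `n` has length at least `ℓ`), then
`p₁ = 1/2` and `p_ℓ = 1/2`. -/
theorem minimal_shuffle_first_last_half (n ℓ : ℕ) (hn : 2 ≤ n)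
    (a b : Fin ℓ → Fin n) (p : Fin ℓ → ℝ)
    (h : IsTranspositionShuffle n ℓ a b p)
    (hmin : ∀ (ℓ' : ℕ) (a' b' : Fin ℓ' → Fin n) (p' : Fin ℓ' → ℝ),
      IsTranspositionShuffle n ℓ' a' b' p' → ℓ ≤ ℓ') :
    ∀ h0 : 0 < ℓ,
      p ⟨0, h0⟩ = 1 / 2 ∧ p ⟨ℓ - 1, Nat.sub_lt h0 Nat.one_pos⟩ = 1 / 2 :=
  minimal_shuffle_first_last_half_general n ℓ a b p h hmin
end

section
/- Let S = (a_i, b_i, p_i)_{i=1}^ℓ be a transposition shuffle of order n whose length ℓ is minimal, i.e., every transposition shuffle of order n has length at least ℓ. If for some index j and some p'_j ∈ [0,1] the sequence obtained from S by replacing p_j with p'_j (keeping all other entries fixed) is also a transposition shuffle of order n, then p'_j = p_j. -/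
open Finset

lemma prod_ofFn_eraseNth {M : Type*} [Monoid M] : ∀ {m : ℕ} (j : Fin (m+1)) (f : Fin (m+1) → M),
    f j = 1 → (List.ofFn f).prod = (List.ofFn (f ∘ j.succAbove)).prod := by
  intro m
  induction m with
  | zero =>
    intro j f hf
    have : j = 0 := Fin.fin_one_eq_zero j
    subst this
    simp [List.ofFn_succ, hf]
  | succ m ih =>
    intro j f hf
    induction j using Fin.cases with
    | zero => simp [List.ofFn_succ, hf, Function.comp]
    | succ j' =>
      have hr : (f ∘ (j'.succ).succAbove) = Fin.cons (f 0) ((f ∘ Fin.succ) ∘ j'.succAbove) := by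
        funext i
        induction i using Fin.cases with
        | zero => simp [Fin.succ_succAbove_zero]
        | succ k => simp [Fin.succ_succAbove_succ]
      have h2 : (List.ofFn (Fin.cons (f 0) ((f ∘ Fin.succ) ∘ j'.succAbove))).prod
          = f 0 * (List.ofFn ((f ∘ Fin.succ) ∘ j'.succAbove)).prod := by
        rw [List.ofFn_succ, List.prod_cons]
        rfl
      rw [hr, h2, List.ofFn_succ, List.prod_cons]
      congr 1
      exact ih j' (f ∘ Fin.succ) (by simpa using hf)

/-- rigidity: if `(aᵢ, bᵢ, pᵢ)ᵢ` is a transposition shuffle of order `n` of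
minimal length, and replacing the single probability `p j` by `p'` (keeping everything
else fixed) again yields a transposition shuffle of order `n`, then `p' = p j`. -/
theorem minimal_shuffle_rigid (n ℓ : ℕ)
    (a b : Fin ℓ → Fin n) (p : Fin ℓ → ℝ)
    (h : IsTranspositionShuffle n ℓ a b p)
    (hmin : ∀ (ℓ' : ℕ) (a' b' : Fin ℓ' → Fin n) (p' : Fin ℓ' → ℝ),
      IsTranspositionShuffle n ℓ' a' b' p' → ℓ ≤ ℓ')
    (j : Fin ℓ) (p' : ℝ) (hp' : 0 ≤ p' ∧ p' ≤ 1)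
    (h' : IsTranspositionShuffle n ℓ a b (Function.update p j p')) :
    p' = p j := by
  by_contra hne
  obtain ⟨ha, hp, hsum⟩ := h
  obtain ⟨-, -, hsum'⟩ := h'
  -- Step 1: replacing `p j` by `0` still gives a shuffle
  have key : ∀ α : Equiv.Perm (Fin n),
      ∑ ω ∈ univ.filter (fun ω : Fin ℓ → Bool => lazyPerm a b ω = α),
        lazyWeight (Function.update p j 0) ω = 1 / (n.factorial : ℝ) := by
    intro α
    set S := univ.filter (fun ω : Fin ℓ → Bool => lazyPerm a b ω = α) with hS
    set W : (Fin ℓ → Bool) → ℝ :=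
      fun ω => ∏ i ∈ univ.erase j, (if ω i then p i else 1 - p i) with hW
    have wfac : ∀ (q : ℝ) (ω : Fin ℓ → Bool),
        lazyWeight (Function.update p j q) ω = (if ω j then q else 1 - q) * W ω := by
      intro q ω
      rw [lazyWeight, ← Finset.mul_prod_erase univ _ (mem_univ j)]
      congr 1
      · simp
      · apply Finset.prod_congr rfl
        intro i hi
        rw [Function.update_of_ne (Finset.ne_of_mem_erase hi)]
    have Fform : ∀ q : ℝ, ∑ ω ∈ S, lazyWeight (Function.update p j q) ω
        = q * ∑ ω ∈ S.filter (fun ω => ω j = true), W ω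
          + (1 - q) * ∑ ω ∈ S.filter (fun ω => ¬ (ω j = true)), W ω := by
      intro q
      rw [← Finset.sum_filter_add_sum_filter_not S (fun ω => ω j = true), Finset.mul_sum,
        Finset.mul_sum]
      congr 1
      · apply Finset.sum_congr rfl; intro ω hω
        rw [Finset.mem_filter] at hω
        rw [wfac, hω.2, if_pos rfl]
      · apply Finset.sum_congr rfl; intro ω hω
        rw [Finset.mem_filter] at hω
        have : ω j = false := by simpa using hω.2
        rw [wfac, this]
        simp
    set A := ∑ ω ∈ S.filter (fun ω => ω j = true), W ω with hA
    set B := ∑ ω ∈ S.filter (fun ω => ¬ (ω j = true)), W ω with hB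
    have e1 : p j * A + (1 - p j) * B = 1 / (n.factorial : ℝ) := by
      rw [← Fform]
      rw [show Function.update p j (p j) = p from Function.update_eq_self j p]
      exact hsum α
    have e2 : p' * A + (1 - p') * B = 1 / (n.factorial : ℝ) := by
      rw [← Fform]; exact hsum' α
    have hAB : A = B := by
      have h0 : (p j - p') * (A - B) = 0 := by linear_combination e1 - e2
      rcases mul_eq_zero.1 h0 with h1 | h1
      · exact absurd (by linarith) hne
      · linarith
    rw [Fform 0]
    rw [hAB] at e1 ⊢
    linarith
  -- Step 2: delete step j to get a shorter shuffle
  obtain ⟨m, rfl⟩ : ∃ m, ℓ = m + 1 := ⟨ℓ - 1, (Nat.succ_pred_eq_of_pos j.pos).symm⟩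
  have hshort : IsTranspositionShuffle n m (a ∘ j.succAbove) (b ∘ j.succAbove)
      (p ∘ j.succAbove) := by
    refine ⟨fun i => ha _, fun i => hp _, fun α => ?_⟩
    have hk := key α
    rw [← Finset.sum_filter_add_sum_filter_not
      (univ.filter fun ω : Fin (m+1) → Bool => lazyPerm a b ω = α) (fun ω => ω j = true)] at hk
    have hz : ∑ ω ∈ ((univ.filter fun ω : Fin (m+1) → Bool => lazyPerm a b ω = α).filter
        (fun ω => ω j = true)), lazyWeight (Function.update p j 0) ω = 0 := by
      apply Finset.sum_eq_zero
      intro ω hω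
      rw [Finset.mem_filter] at hω
      exact Finset.prod_eq_zero (mem_univ j) (by simp [hω.2])
    rw [hz, zero_add] at hk
    rw [← hk]
    refine (Finset.sum_nbij' (fun ω => ω ∘ j.succAbove)
      (fun ω => Fin.insertNth j false ω) ?_ ?_ ?_ ?_ ?_).symm
    · intro ω hω
      simp only [Finset.mem_filter, Finset.mem_univ, true_and] at hω ⊢
      have hωj : ω j = false := by simpa using hω.2
      rw [← hω.1, lazyPerm, lazyPerm, prod_ofFn_eraseNth j _ (by simp [hωj])]
      rfl
    · intro ω hω
      simp only [Finset.mem_filter, Finset.mem_univ, true_and] at hω ⊢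
      refine ⟨?_, by simp⟩
      rw [← hω, lazyPerm, lazyPerm, prod_ofFn_eraseNth j _ (by simp)]
      congr 1
      exact congrArg List.ofFn (funext fun i => by
        simp [Function.comp, Fin.insertNth_apply_succAbove])
    · intro ω hω
      simp only [Finset.mem_filter] at hω
      have hωj : ω j = false := by simpa using hω.2
      rw [Fin.insertNth_eq_iff]
      exact ⟨hωj.symm, rfl⟩
    · intro ω hω
      funext k
      simp [Function.comp, Fin.insertNth_apply_succAbove]
    · intro ω hω
      rw [lazyWeight, lazyWeight, Fin.prod_univ_succAbove _ j]
      rw [Finset.mem_filter] at hω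
      have hωj : ω j = false := by simpa using hω.2
      rw [hωj]
      simp only [Bool.false_eq_true, if_false, Function.update_self, sub_zero, one_mul]
      apply Finset.prod_congr rfl
      intro i _
      rw [Function.update_of_ne (Fin.succAbove_ne j i)]
      rfl
  have := hmin m _ _ _ hshort
  omega
end

section
/- Let (a_i)_{i=1}^ℓ be a reduced word of order n ≥ 2, where ℓ = n(n-1)/2. There exists a set H ⊆ {1,…,ℓ} with |H| = n - 1 such that for every ω ∈ {0,1}^ℓ: the composition π(ω) := s_1∘⋯∘s_ℓ (where s_i = t(a_i, a_i+1) if ω_i = 1 and s_i = id otherwise) satisfies π(ω)(n) = 1 if and only if ω_h = 1 for all h ∈ H; moreover, in that case, writing π_i(ω) := s_1∘⋯∘s_i, one has π_i(ω)^{-1}(1) - π_{i-1}(ω)^{-1}(1) = 1 if i ∈ H and = 0 if i ∉ H, for all 1 ≤ i ≤ ℓ. -/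
/-!
The word has the length `n(n-1)/2` of the reverse permutation, and each adjacent transposition
changes the inversion number by `±1`, so every step is an ascent: `σⱼ(aⱼ) < σⱼ(aⱼ + 1)` for the
prefixes `σⱼ`. Hence the position `σⱼ⁻¹(1)` of the element `1` (index `0` of `Fin n`) is never at
`aⱼ + 1`, i.e. it never moves left; travelling from `1` to `n`, it moves right at exactly
`n - 1` times, which form `H`.
Under a lazy outcome the position of `1` stays weakly behind this full trajectory and agrees with
it as long as every move at a time of `H` is performed; once behind, it cannot catch up, again
because the full trajectory is never at `aⱼ + 1`.
-/

open Finset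

/-- The composition `s₁ ∘ ⋯ ∘ s_j` of the first `j` lazy transpositions at outcome `ω`. -/
def lazyPartial {n ℓ : ℕ} (a b : Fin ℓ → Fin n) (ω : Fin ℓ → Bool) (j : ℕ) :
    Equiv.Perm (Fin n) :=
  ((List.ofFn fun i => if ω i then Equiv.swap (a i) (b i) else 1).take j).prod

open Equiv

section Inversions

variable {n : ℕ}

def invCount (σ : Perm (Fin n)) : ℕ :=
  (univ.filter fun p : Fin n × Fin n => p.1 < p.2 ∧ σ p.2 < σ p.1).card

lemma swap_lt_swap_iff_of_val_eq_succ {c d i j : Fin n} (hcd : (d : ℕ) = c + 1)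
    (h₁ : ¬(i = c ∧ j = d)) (h₂ : ¬(i = d ∧ j = c)) :
    swap c d i < swap c d j ↔ i < j := by
  simp only [swap_apply_def, Fin.lt_def, Fin.ext_iff] at *
  split_ifs <;> omega

lemma invCount_one : invCount (1 : Perm (Fin n)) = 0 := by
  simp only [invCount, Perm.one_apply]
  exact card_eq_zero.2 (filter_eq_empty_iff.2 fun p _ h => lt_asymm h.1 h.2)

lemma invCount_mul_swap_of_lt {σ : Perm (Fin n)} {c d : Fin n} (hcd : (d : ℕ) = c + 1)
    (hσ : σ c < σ d) : invCount (σ * swap c d) = invCount σ + 1 := by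
  have hdc : ¬ d < c := by rw [Fin.lt_def]; omega
  have hinv : invCount (σ * swap c d) =
      (univ.filter fun p : Fin n × Fin n => swap c d p.1 < swap c d p.2 ∧ σ p.2 < σ p.1).card := by
    refine card_equiv ((swap c d).prodCongr (swap c d)) fun p => ?_
    rw [mem_filter, mem_filter]
    simp
  have hins : (univ.filter fun p : Fin n × Fin n => swap c d p.1 < swap c d p.2 ∧ σ p.2 < σ p.1)
      = insert (d, c) (univ.filter fun p : Fin n × Fin n => p.1 < p.2 ∧ σ p.2 < σ p.1) := by
    ext ⟨i, j⟩
    simp only [mem_filter, mem_univ, true_and, mem_insert, Prod.mk.injEq]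
    by_cases hij : i = d ∧ j = c
    · obtain ⟨rfl, rfl⟩ := hij
      simp [hσ, Fin.lt_def, hcd]
    by_cases hji : i = c ∧ j = d
    · obtain ⟨rfl, rfl⟩ := hji
      simp [hσ.not_gt, hij]
    · rw [swap_lt_swap_iff_of_val_eq_succ hcd hji hij]
      tauto
  rw [hinv, hins, card_insert_of_notMem (by simp [hdc]), invCount]

lemma invCount_mul_swap_of_gt {σ : Perm (Fin n)} {c d : Fin n} (hcd : (d : ℕ) = c + 1)
    (hσ : σ d < σ c) : invCount (σ * swap c d) + 1 = invCount σ := by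
  simpa [mul_assoc] using
    (invCount_mul_swap_of_lt (σ := σ * swap c d) hcd (by simpa using hσ)).symm

lemma invCount_mul_swap_le (σ : Perm (Fin n)) {c d : Fin n} (hcd : (d : ℕ) = c + 1) :
    invCount (σ * swap c d) ≤ invCount σ + 1 := by
  have hne : σ c ≠ σ d := σ.injective.ne (by simp [Fin.ext_iff]; omega)
  rcases hne.lt_or_gt with h | h
  · exact (invCount_mul_swap_of_lt hcd h).le
  · have := invCount_mul_swap_of_gt hcd h
    omega

lemma invCount_reversePerm : invCount (reversePerm n) = n * (n - 1) / 2 := by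
  have hrev (p : Fin n × Fin n) : (p.1 < p.2 ∧ reversePerm n p.2 < reversePerm n p.1) ↔ p.1 < p.2 :=
    and_iff_left_of_imp Fin.rev_lt_rev.mpr
  simp only [invCount, hrev]
  have hIio (j : Fin n) : (univ.filter fun i : Fin n => i < j).card = j := by
    rw [filter_gt_eq_Iio, Fin.card_Iio]
  rw [card_filter, Fintype.sum_prod_type_right]
  simp only [sum_boole, hIio, Nat.cast_id]
  rw [Fin.sum_univ_eq_sum_range (fun i => i) n, sum_range_id]

end Inversions

section Trajectory

variable {n ℓ : ℕ} (a b : Fin ℓ → Fin n) (ω : Fin ℓ → Bool)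

lemma lazyPartial_zero : lazyPartial a b ω 0 = 1 := by
  simp [lazyPartial]

lemma lazyPartial_succ (j : Fin ℓ) :
    lazyPartial a b ω (j + 1) =
      lazyPartial a b ω j * if ω j then swap (a j) (b j) else 1 := by
  simp [lazyPartial, List.take_add_one]

lemma lazyPartial_of_le {j : ℕ} (hj : ℓ ≤ j) : lazyPartial a b ω j = lazyPerm a b ω := by
  rw [lazyPartial, lazyPerm, List.take_of_length_le (by simpa using hj)]


def lazyTrajectory (x : Fin n) (j : ℕ) : Fin n :=
  (lazyPartial a b ω j)⁻¹ x

lemma lazyTrajectory_zero (x : Fin n) : lazyTrajectory a b ω x 0 = x := by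
  simp [lazyTrajectory, lazyPartial_zero]

lemma lazyTrajectory_succ (x : Fin n) (j : Fin ℓ) :
    lazyTrajectory a b ω x (j + 1) =
      (if ω j then swap (a j) (b j) else 1) (lazyTrajectory a b ω x j) := by
  rw [lazyTrajectory, lazyPartial_succ, mul_inv_rev]
  cases ω j <;> simp [lazyTrajectory, Perm.mul_apply]

lemma lazyTrajectory_of_le (x : Fin n) {j : ℕ} (hj : ℓ ≤ j) :
    lazyTrajectory a b ω x j = (lazyPerm a b ω)⁻¹ x := by
  rw [lazyTrajectory, lazyPartial_of_le a b ω hj]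

end Trajectory

section ReducedWord

variable {n ℓ : ℕ} {a b : Fin ℓ → Fin n}

theorem lazyPartial_true_apply_lt_of_invCount_eq (hsimple : ∀ i, (b i : ℕ) = a i + 1)
    (hred : invCount (lazyPerm a b fun _ => true) = ℓ) (j : Fin ℓ) :
    lazyPartial a b (fun _ => true) j (a j) < lazyPartial a b (fun _ => true) j (b j) := by
  set σ := lazyPartial a b fun _ => true
  have hσ_succ (k : Fin ℓ) : σ (k + 1) = σ k * swap (a k) (b k) := by
    simpa using lazyPartial_succ a b (fun _ => true) k
  have hstep (k : ℕ) : invCount (σ (k + 1)) ≤ invCount (σ k) + 1 := by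
    rcases lt_or_ge k ℓ with hk | hk
    · simpa [hσ_succ ⟨k, hk⟩] using invCount_mul_swap_le (σ k) (hsimple ⟨k, hk⟩)
    · simp [σ, lazyPartial_of_le _ _ _ hk, lazyPartial_of_le _ _ _ (hk.trans k.le_succ)]
  -- `k - invCount (σ k)` is monotone and vanishes at `0` and `ℓ`, so every step is an ascent.
  have hmono : Monotone fun k : ℕ => (k : ℤ) - invCount (σ k) :=
    monotone_nat_of_le_succ fun k => by have := hstep k; push_cast; omega
  have hinv (k : ℕ) (hk : k ≤ ℓ) : invCount (σ k) = k := by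
    have h₀ : (0 : ℤ) - invCount (σ 0) ≤ k - invCount (σ k) := hmono k.zero_le
    have h₁ : (k : ℤ) - invCount (σ k) ≤ ℓ - invCount (σ ℓ) := hmono hk
    rw [show σ 0 = 1 from lazyPartial_zero .., invCount_one] at h₀
    rw [show σ ℓ = _ from lazyPartial_of_le _ _ _ le_rfl, hred] at h₁
    omega
  have hne : σ j (b j) ≠ σ j (a j) := (σ j).injective.ne (by simp [Fin.ext_iff, hsimple])
  refine lt_of_not_ge fun hle => ?_
  have hdesc := invCount_mul_swap_of_gt (hsimple j) (lt_of_le_of_ne hle hne)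
  rw [← hσ_succ, hinv _ j.isLt, hinv _ j.isLt.le] at hdesc
  omega

end ReducedWord

section Comparison

variable {n : ℕ}

lemma val_swap_apply_of_ne_right {c d x : Fin n} (hcd : (d : ℕ) = c + 1) (hx : x ≠ d) :
    (swap c d x : ℕ) = x + if x = c then 1 else 0 := by
  simp only [swap_apply_def, ne_eq, Fin.ext_iff] at *
  split_ifs <;> omega

lemma lazySwap_apply_le_swap_apply {c d x y : Fin n} (hcd : (d : ℕ) = c + 1) (hx : x ≠ d)
    (hyx : y ≤ x) (w : Bool) :
    (if w then swap c d else 1) y ≤ swap c d x ∧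
      ((if w then swap c d else 1) y = swap c d x ↔ y = x ∧ (x = c → w = true)) := by
  rw [Fin.le_def] at hyx ⊢
  rw [Fin.ext_iff, Fin.ext_iff, val_swap_apply_of_ne_right hcd hx]
  cases w <;> simp only [Bool.false_eq_true, if_true, if_false, Perm.one_apply,
    swap_apply_def, Fin.ext_iff] at * <;> split_ifs <;> grind

variable {ℓ : ℕ} {a b : Fin ℓ → Fin n}

def rightMoves (a b : Fin ℓ → Fin n) (x : Fin n) : Finset (Fin ℓ) :=
  univ.filter fun j => lazyTrajectory a b (fun _ => true) x j = a j

theorem lazyTrajectory_le_and_eq_iff (hsimple : ∀ i, (b i : ℕ) = a i + 1) (ω : Fin ℓ → Bool)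
    (x : Fin n) (hright : ∀ j : Fin ℓ, lazyTrajectory a b (fun _ => true) x j ≠ b j)
    (j : ℕ) (hj : j ≤ ℓ) :
    lazyTrajectory a b ω x j ≤ lazyTrajectory a b (fun _ => true) x j ∧
      (lazyTrajectory a b ω x j = lazyTrajectory a b (fun _ => true) x j ↔
        ∀ h ∈ rightMoves a b x, (h : ℕ) < j → ω h = true) := by
  induction j with
  | zero => simp [lazyTrajectory_zero]
  | succ j ih =>
    set k : Fin ℓ := ⟨j, hj⟩
    obtain ⟨hle, heq⟩ := ih (by omega)
    have hsplit (P : Fin ℓ → Prop) :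
        (∀ h : Fin ℓ, P h → (h : ℕ) < j + 1 → ω h = true) ↔
          (∀ h : Fin ℓ, P h → (h : ℕ) < j → ω h = true) ∧ (P k → ω k = true) :=
      ⟨fun H => ⟨fun h hP hh => H h hP (by omega), fun hP => H k hP (by simp [k])⟩,
        fun ⟨H, Hk⟩ h hP hh => (Nat.lt_succ_iff_lt_or_eq.1 hh).elim (H h hP) fun e =>
          (Fin.ext e : h = k) ▸ Hk ((Fin.ext e : h = k) ▸ hP)⟩
    have hfull := lazyTrajectory_succ a b (fun _ => true) x k
    simp only [if_true] at hfull
    simp only [rightMoves, mem_filter, mem_univ, true_and] at heq ⊢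
    rw [lazyTrajectory_succ a b ω x k, hfull, hsplit, ← heq]
    exact lazySwap_apply_le_swap_apply (hsimple k) (hright k) hle (ω k)

lemma val_lazyTrajectory_true_succ (hsimple : ∀ i, (b i : ℕ) = a i + 1) (x : Fin n)
    (hright : ∀ j : Fin ℓ, lazyTrajectory a b (fun _ => true) x j ≠ b j) (j : Fin ℓ) :
    (lazyTrajectory a b (fun _ => true) x (j + 1) : ℕ) =
      lazyTrajectory a b (fun _ => true) x j + if j ∈ rightMoves a b x then 1 else 0 := by
  rw [lazyTrajectory_succ, if_pos rfl, val_swap_apply_of_ne_right (hsimple j) (hright j)]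
  simp [rightMoves]

theorem card_rightMoves_add (hsimple : ∀ i, (b i : ℕ) = a i + 1) (x : Fin n)
    (hright : ∀ j : Fin ℓ, lazyTrajectory a b (fun _ => true) x j ≠ b j) :
    (rightMoves a b x).card + x = lazyTrajectory a b (fun _ => true) x ℓ := by
  set X : ℕ → ℕ := fun j => lazyTrajectory a b (fun _ => true) x j
  change _ + (x : ℕ) = X ℓ
  have hmono : Monotone X := monotone_nat_of_le_succ fun j => by
    rcases lt_or_ge j ℓ with hj | hj
    · simp [X, val_lazyTrajectory_true_succ hsimple x hright ⟨j, hj⟩]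
    · simp [X, lazyTrajectory_of_le _ _ _ _ hj, lazyTrajectory_of_le _ _ _ _ (hj.trans j.le_succ)]
  have htele : (rightMoves a b x).card = X ℓ - X 0 := by
    rw [rightMoves, card_filter, ← sum_range_tsub hmono,
      ← Fin.sum_univ_eq_sum_range (fun j => X (j + 1) - X j)]
    refine sum_congr rfl fun j _ => ?_
    simp [X, val_lazyTrajectory_true_succ hsimple x hright j, rightMoves]
  have hX0 : X 0 = x := by simp [X, lazyTrajectory_zero]
  have := hmono (Nat.zero_le ℓ)
  omega

end Comparison

/-- trajectory lemma: for a reduced word of order `n ≥ 2` (encoded by the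
adjacent transpositions it performs, with `bᵢ = aᵢ + 1`, of length `ℓ = n(n-1)/2`, composing
to the reverse permutation), there is a set `H` of `n - 1` indices such that for every
outcome `ω`: `π(ω)` maps the last position to the first if and only if `ω_h = 1` for all
`h ∈ H`; and in that case the trajectory of the first element moves right exactly at the
times in `H`: `π_i(ω)⁻¹(1) - π_{i-1}(ω)⁻¹(1) = 1` if `i ∈ H` and `= 0` otherwise.
(Positions/elements are `0`-based: element `1` is `⟨0, _⟩`, position `n` is `⟨n-1, _⟩`.) -/
theorem trajectory_lemma (n ℓ : ℕ) (hn : 2 ≤ n) (hl : ℓ = n * (n - 1) / 2)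
    (a b : Fin ℓ → Fin n) (hsimple : ∀ i, (b i : ℕ) = (a i : ℕ) + 1)
    (hword : (List.ofFn fun i => Equiv.swap (a i) (b i)).prod = reversePerm n) :
    ∃ H : Finset (Fin ℓ), H.card = n - 1 ∧
      ∀ ω : Fin ℓ → Bool,
        (lazyPerm a b ω ⟨n - 1, by omega⟩ = ⟨0, by omega⟩ ↔ ∀ h ∈ H, ω h = true) ∧
        ((∀ h ∈ H, ω h = true) → ∀ i : Fin ℓ,
          (((lazyPartial a b ω ((i : ℕ) + 1))⁻¹ ⟨0, by omega⟩ : Fin n) : ℕ) =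
            (((lazyPartial a b ω (i : ℕ))⁻¹ ⟨0, by omega⟩ : Fin n) : ℕ) +
              (if i ∈ H then 1 else 0)) := by
  set x₀ : Fin n := ⟨0, by omega⟩
  have hfull : lazyPerm a b (fun _ => true) = reversePerm n := by simpa [lazyPerm] using hword
  have hright (j : Fin ℓ) : lazyTrajectory a b (fun _ => true) x₀ j ≠ b j := fun hXb => by
    have hasc := lazyPartial_true_apply_lt_of_invCount_eq hsimple
      (by rw [hfull, invCount_reversePerm, hl]) j
    rw [← Perm.inv_eq_iff_eq.1 hXb] at hasc
    exact Nat.not_lt_zero _ hasc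
  have hXℓ : lazyTrajectory a b (fun _ => true) x₀ ℓ = ⟨n - 1, by omega⟩ := by
    simp [x₀, lazyTrajectory_of_le _ _ _ _ le_rfl, hfull, reversePerm, Fin.ext_iff]
  refine ⟨rightMoves a b x₀, ?_, fun ω => ⟨?_, fun hall i => ?_⟩⟩
  · have := card_rightMoves_add hsimple x₀ hright
    rw [hXℓ] at this
    simpa [x₀] using this
  · rw [eq_comm, ← Perm.inv_eq_iff_eq, ← lazyTrajectory_of_le a b ω _ le_rfl, ← hXℓ,
      (lazyTrajectory_le_and_eq_iff hsimple ω x₀ hright ℓ le_rfl).2]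
    simp
  · have hY (j : ℕ) (hj : j ≤ ℓ) :
        lazyTrajectory a b ω x₀ j = lazyTrajectory a b (fun _ => true) x₀ j :=
      (lazyTrajectory_le_and_eq_iff hsimple ω x₀ hright j hj).2.2 fun h hH _ => hall h hH
    change (lazyTrajectory a b ω x₀ (i + 1) : ℕ) = lazyTrajectory a b ω x₀ i + _
    rw [hY _ i.isLt, hY _ i.isLt.le, val_lazyTrajectory_true_succ hsimple x₀ hright i]
end

section
/- Every sweep of order n has length at least n - 1. -/
open Finset

/-- `(aᵢ, bᵢ, pᵢ)ᵢ` is a sweep of order `n`: a lazy transposition sequence such that the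
last entry `π(ω)(n)` of the resulting permutation is uniform on `{1,…,n}`
(positions are `0`-based: the last position is `⟨n-1, _⟩`). -/
def IsSweep (n ℓ : ℕ) (hn : 0 < n) (a b : Fin ℓ → Fin n) (p : Fin ℓ → ℝ) : Prop :=
  (∀ i, a i ≠ b i) ∧ (∀ i, 0 ≤ p i ∧ p i ≤ 1) ∧
    ∀ j : Fin n,
      ∑ ω ∈ univ.filter fun ω : Fin ℓ → Bool =>
          lazyPerm a b ω ⟨n - 1, Nat.sub_lt hn Nat.one_pos⟩ = j,
        lazyWeight p ω = 1 / (n : ℝ)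


def reachSet {n : ℕ} : List (Fin n × Fin n) → Fin n → Finset (Fin n)
  | [], x => {x}
  | e :: L, x => reachSet L x ∪ (reachSet L x).image (Equiv.swap e.1 e.2)

lemma union_image_swap_card_le {n : ℕ} (R : Finset (Fin n)) (u v : Fin n) :
    (R ∪ R.image (Equiv.swap u v)).card ≤ R.card + 1 := by
  by_cases hu : u ∈ R
  · by_cases hv : v ∈ R
    · have hsub : R ∪ R.image (Equiv.swap u v) ⊆ R := by
        intro y hy
        rcases mem_union.1 hy with hy | hy
        · exact hy
        · obtain ⟨x, hx, rfl⟩ := mem_image.1 hy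
          rw [Equiv.swap_apply_def]
          split_ifs <;> assumption
      exact (card_le_card hsub).trans (Nat.le_succ _)
    · have hsub : R ∪ R.image (Equiv.swap u v) ⊆ insert v R := by
        intro y hy
        rcases mem_union.1 hy with hy | hy
        · exact mem_insert_of_mem hy
        · obtain ⟨x, hx, rfl⟩ := mem_image.1 hy
          rw [Equiv.swap_apply_def]
          split_ifs with h1 h2
          · exact mem_insert_self _ _
          · subst h2; exact absurd hx hv
          · exact mem_insert_of_mem hx
      exact (card_le_card hsub).trans (card_insert_le _ _)
  · have hsub : R ∪ R.image (Equiv.swap u v) ⊆ insert u R := by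
      intro y hy
      rcases mem_union.1 hy with hy | hy
      · exact mem_insert_of_mem hy
      · obtain ⟨x, hx, rfl⟩ := mem_image.1 hy
        rw [Equiv.swap_apply_def]
        split_ifs with h1 h2
        · subst h1; exact absurd hx hu
        · exact mem_insert_self _ _
        · exact mem_insert_of_mem hx
    exact (card_le_card hsub).trans (card_insert_le _ _)

lemma reachSet_card_le {n : ℕ} (L : List (Fin n × Fin n)) (x : Fin n) :
    (reachSet L x).card ≤ L.length + 1 := by
  induction L with
  | nil => simp [reachSet]
  | cons e L ih =>
      calc (reachSet (e :: L) x).card ≤ (reachSet L x).card + 1 :=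
            union_image_swap_card_le _ _ _
        _ ≤ L.length + 1 + 1 := by omega
        _ = (e :: L).length + 1 := by simp

lemma prod_mem_reachSet {n : ℕ} {L : List (Fin n × Fin n)} {M : List (Equiv.Perm (Fin n))}
    (h : List.Forall₂ (fun e s => s = 1 ∨ s = Equiv.swap e.1 e.2) L M) (x : Fin n) :
    M.prod x ∈ reachSet L x := by
  induction h with
  | nil => simp [reachSet]
  | @cons e s L M hr h ih =>
      rw [List.prod_cons]
      have : (s * M.prod) x = s (M.prod x) := rfl
      rw [this]
      rcases hr with rfl | rfl
      · simpa [reachSet] using Or.inl ih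
      · exact mem_union.2 (Or.inr (mem_image_of_mem _ ih))

/-- every sweep of order `n` has length at least `n - 1`. -/
theorem sweep_length_lower_bound (n ℓ : ℕ) (hn : 0 < n)
    (a b : Fin ℓ → Fin n) (p : Fin ℓ → ℝ)
    (h : IsSweep n ℓ hn a b p) :
    n - 1 ≤ ℓ := by
  set x₀ : Fin n := ⟨n - 1, Nat.sub_lt hn Nat.one_pos⟩
  set L : List (Fin n × Fin n) := List.ofFn fun i => (a i, b i) with hL
  -- every j is reachable
  have hreach : ∀ j : Fin n, j ∈ reachSet L x₀ := by
    intro j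
    have hsum := h.2.2 j
    have hne : (1 : ℝ) / (n : ℝ) ≠ 0 := by
      have : (0:ℝ) < n := by exact_mod_cast hn
      positivity
    have hnonempty : (univ.filter fun ω : Fin ℓ → Bool =>
        lazyPerm a b ω x₀ = j).Nonempty := by
      by_contra hemp
      rw [not_nonempty_iff_eq_empty] at hemp
      rw [hemp, sum_empty] at hsum
      exact hne hsum.symm
    obtain ⟨ω, hω⟩ := hnonempty
    have hωeq : lazyPerm a b ω x₀ = j := (mem_filter.1 hω).2
    have hf : List.Forall₂ (fun (e : Fin n × Fin n) (s : Equiv.Perm (Fin n)) =>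
        s = 1 ∨ s = Equiv.swap e.1 e.2)
        L (List.ofFn fun i => if ω i then Equiv.swap (a i) (b i) else 1) := by
      rw [hL, List.forall₂_iff_get]
      refine ⟨by simp, fun i h1 h2 => ?_⟩
      simp only [List.get_ofFn, Fin.cast_mk]
      by_cases hωi : ω ⟨i, by simpa using h1⟩
      · exact Or.inr (by simp [hωi])
      · exact Or.inl (by simp [hωi])
    have := prod_mem_reachSet hf x₀
    rwa [show (List.ofFn fun i => if ω i then Equiv.swap (a i) (b i) else 1).prod
        = lazyPerm a b ω from rfl, hωeq] at this
  have hcard : n ≤ ℓ + 1 := by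
    have h1 : (univ : Finset (Fin n)).card ≤ (reachSet L x₀).card :=
      card_le_card fun j _ => hreach j
    have h2 := reachSet_card_le L x₀
    simp only [card_univ, Fintype.card_fin, hL, List.length_ofFn] at h1 h2 ⊢
    omega
  omega
end

section
/- For every n ≥ 2, the lazy transposition sequence (1,2,1/2), (2,3,2/3), …, (n-1,n,(n-1)/n), i.e., with i-th entry (i, i+1, i/(i+1)) for 1 ≤ i ≤ n-1, is a sweep of order n. -/
/-!
Let `πₘ` be the product of the first `m` lazy transpositions `(i, i+1, i/(i+1))`. By induction
on `m`, `πₘ(m+1)` is uniform on `{1,…,m+1}`: the transposition `(m, m+1)` acts first; it fires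
with probability `m/(m+1)`, after which `πₘ₋₁(m)` is uniform on `{1,…,m}`, and otherwise `m+1`
is fixed by all remaining transpositions. The mixture
`m/(m+1) · Unif{1,…,m} + 1/(m+1) · δ_{m+1}` is `Unif{1,…,m+1}`.
-/

open Finset

section LazyTransposition

variable {n ℓ : ℕ}

def lazyImageProb (a b : Fin ℓ → Fin n) (p : Fin ℓ → ℝ) (x j : Fin n) : ℝ :=
  ∑ ω ∈ univ.filter fun ω : Fin ℓ → Bool => lazyPerm a b ω x = j, lazyWeight p ω

theorem lazyPerm_eq_init_mul (a b : Fin (ℓ + 1) → Fin n) (ω : Fin (ℓ + 1) → Bool) :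
    lazyPerm a b ω = lazyPerm (Fin.init a) (Fin.init b) (Fin.init ω) *
      if ω (Fin.last ℓ) then Equiv.swap (a (Fin.last ℓ)) (b (Fin.last ℓ)) else 1 := by
  rw [lazyPerm, List.ofFn_succ', List.prod_concat]
  rfl

theorem lazyWeight_eq_init_mul (p : Fin (ℓ + 1) → ℝ) (ω : Fin (ℓ + 1) → Bool) :
    lazyWeight p ω = lazyWeight (Fin.init p) (Fin.init ω) *
      if ω (Fin.last ℓ) then p (Fin.last ℓ) else 1 - p (Fin.last ℓ) := by
  rw [lazyWeight, Fin.prod_univ_castSucc]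
  rfl

theorem sum_lazyWeight (p : Fin ℓ → ℝ) : ∑ ω, lazyWeight p ω = 1 := by
  simp [lazyWeight, ← Fintype.prod_sum fun i (c : Bool) => if c then p i else 1 - p i]

theorem lazyPerm_apply_of_forall_ne {a b : Fin ℓ → Fin n} {x : Fin n}
    (ha : ∀ i, a i ≠ x) (hb : ∀ i, b i ≠ x) (ω : Fin ℓ → Bool) : lazyPerm a b ω x = x := by
  have hstab : lazyPerm a b ω ∈ MulAction.stabilizer (Equiv.Perm (Fin n)) x := by
    refine list_prod_mem fun σ hσ => ?_
    obtain ⟨i, rfl⟩ := List.mem_ofFn.mp hσ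
    cases ω i
    · exact one_mem _
    · exact Equiv.swap_apply_of_ne_of_ne (ha i).symm (hb i).symm
  exact hstab

theorem lazyImageProb_of_forall_ne {a b : Fin ℓ → Fin n} {x : Fin n}
    (ha : ∀ i, a i ≠ x) (hb : ∀ i, b i ≠ x) (p : Fin ℓ → ℝ) (j : Fin n) :
    lazyImageProb a b p x j = if x = j then 1 else 0 := by
  simp only [lazyImageProb, lazyPerm_apply_of_forall_ne ha hb, filter_const]
  split_ifs <;> simp [sum_lazyWeight]

-- The last transposition is the first to act on `x`.
theorem lazyImageProb_succ (a b : Fin (ℓ + 1) → Fin n) (p : Fin (ℓ + 1) → ℝ) (x j : Fin n) :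
    lazyImageProb a b p x j =
      p (Fin.last ℓ) * lazyImageProb (Fin.init a) (Fin.init b) (Fin.init p)
          (Equiv.swap (a (Fin.last ℓ)) (b (Fin.last ℓ)) x) j +
        (1 - p (Fin.last ℓ)) * lazyImageProb (Fin.init a) (Fin.init b) (Fin.init p) x j := by
  simp only [lazyImageProb, sum_filter, mul_sum, ← (Fin.snocEquiv _).sum_comp,
    Fintype.sum_prod_type, Fintype.sum_bool]
  simp [Fin.snocEquiv, lazyPerm_eq_init_mul, lazyWeight_eq_init_mul, mul_comm, add_comm]

theorem lazyImageProb_adjacent :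
    ∀ (m : ℕ) (hm : m < n) (j : Fin n),
      lazyImageProb (fun i : Fin m => (⟨i, by omega⟩ : Fin n)) (fun i => ⟨i + 1, by omega⟩)
          (fun i => ((i : ℕ) + 1 : ℝ) / ((i : ℕ) + 2)) ⟨m, hm⟩ j =
        if (j : ℕ) ≤ m then 1 / (m + 1 : ℝ) else 0
  | 0, hm, j => by
    simp [lazyImageProb_of_forall_ne finZeroElim finZeroElim, Fin.ext_iff, eq_comm]
  | m + 1, hm, j => by
    have hswap : Equiv.swap (⟨m, by omega⟩ : Fin n) ⟨m + 1, hm⟩ ⟨m + 1, hm⟩ = ⟨m, by omega⟩ :=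
      Equiv.swap_apply_right _ _
    have hfixed : ∀ i : Fin m, (⟨i, by omega⟩ : Fin n) ≠ ⟨m + 1, hm⟩ ∧
        (⟨i + 1, by omega⟩ : Fin n) ≠ ⟨m + 1, hm⟩ :=
      fun i => by simp only [ne_eq, Fin.ext_iff]; omega
    rw [lazyImageProb_succ]
    simp only [Fin.init_def, Fin.val_castSucc, Fin.val_last]
    rw [hswap, lazyImageProb_adjacent m (by omega) j,
      lazyImageProb_of_forall_ne (fun i => (hfixed i).1) (fun i => (hfixed i).2)]
    simp only [Fin.ext_iff]
    push_cast
    split_ifs <;> first | omega | (field_simp; ring)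

end LazyTransposition

/-- for `n ≥ 2`, the lazy transposition sequence with `i`-th entry
`(i, i+1, i/(i+1))` for `1 ≤ i ≤ n-1` (here `0`-based: `j`-th entry
`(j, j+1, (j+1)/(j+2))` for `0 ≤ j ≤ n-2`) is a sweep of order `n`. -/
theorem adjacent_sweep (n : ℕ) (hn : 2 ≤ n) :
    IsSweep n (n - 1) (by omega)
      (fun j => ⟨(j : ℕ), by have := j.isLt; omega⟩)
      (fun j => ⟨(j : ℕ) + 1, by have := j.isLt; omega⟩)
      (fun j => ((j : ℕ) + 1 : ℝ) / ((j : ℕ) + 2 : ℝ)) := by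
  refine ⟨fun i => by simp [Fin.ext_iff], fun i => ⟨by positivity, ?_⟩, fun j => ?_⟩
  · exact div_le_one_of_le₀ (by linarith) (by positivity)
  · have hj : (j : ℕ) ≤ n - 1 := by omega
    have hn' : ((n - 1 : ℕ) : ℝ) + 1 = n := by rw [Nat.cast_sub (by omega)]; ring
    have := lazyImageProb_adjacent (n - 1) (by omega) j
    rwa [if_pos hj, hn'] at this
end

section
/- For n ≥ 3, there is no transposition shuffle (a_i, b_i, p_i)_{i=1}^ℓ of order n with p_i = 1/2 for all i. -/
open Finset

/-! With all `pᵢ = 1/2` every outcome has weight `2^{-ℓ}`, so uniformity forces each fibre of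
`lazyPerm` to have `2^ℓ / n!` elements. Hence `n! ∣ 2^ℓ`, impossible once `3 ∣ n!`. -/

open Nat

lemma lazyWeight_half {ℓ : ℕ} (ω : Fin ℓ → Bool) :
    lazyWeight (fun _ => (1 / 2 : ℝ)) ω = (2 ^ ℓ)⁻¹ := by
  norm_num [lazyWeight]

lemma IsTranspositionShuffle.card_fiber_mul_factorial {n ℓ : ℕ} {a b : Fin ℓ → Fin n}
    (h : IsTranspositionShuffle n ℓ a b fun _ => 1 / 2) (α : Equiv.Perm (Fin n)) :
    #{ω | lazyPerm a b ω = α} * n ! = 2 ^ ℓ := by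
  have uniform := h.2.2 α
  simp only [lazyWeight_half, sum_const, nsmul_eq_mul] at uniform
  have : (#{ω | lazyPerm a b ω = α} : ℝ) * n ! = 2 ^ ℓ := by field_simp at uniform; exact uniform
  exact_mod_cast this

lemma lt_three_of_factorial_dvd_two_pow {n ℓ : ℕ} (h : n ! ∣ 2 ^ ℓ) : n < 3 := by
  by_contra! hn
  have : 3 ∣ 2 := Nat.prime_three.dvd_of_dvd_pow ((Nat.dvd_factorial three_pos hn).trans h)
  omega

/-- for `n ≥ 3`, no transposition shuffle of order `n` has all its
probabilities equal to `1/2`. -/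
theorem no_all_half_shuffle (n ℓ : ℕ) (hn : 3 ≤ n)
    (a b : Fin ℓ → Fin n) (p : Fin ℓ → ℝ)
    (h : IsTranspositionShuffle n ℓ a b p) :
    ¬ ∀ i, p i = 1 / 2 := by
  intro hp
  obtain rfl : p = fun _ => 1 / 2 := funext hp
  have hdvd : n ! ∣ 2 ^ ℓ := Dvd.intro_left _ (h.card_fiber_mul_factorial 1)
  exact (lt_three_of_factorial_dvd_two_pow hdvd).not_ge hn
end
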